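/- arXiv:math/9905064 — 3 statements merged into one kernel-verified Lean document; each statement's English description precedes it below -/
import Mathlib

section
/- If λ ∈ 𝔥 is nonzero, then the Fock module M(1,λ) is an irreducible module for the fixed-point vertex operator subalgebra 𝓗^+, and M(1,λ) and M(1,−λ) are isomorphic as 𝓗^+-modules. -/
/-!
Common framework: vertex operator algebras over ℂ encoded via their modes,
weak/admissible/ordinary modules, twisted modules, Zhu's algebra data,
and the free bosonic (Heisenberg) vertex operator algebra `𝓗 = M(1)` of rank `ℓ`
together with its `θ`-fixed subalgebra `𝓗⁺`.
-/

open scoped BigOperators DirectSum TensorProduct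

noncomputable section

/-- Generalized binomial coefficient `(q choose n)` for `q : ℚ`. -/
def qchoose (q : ℚ) : ℕ → ℚ
  | 0 => 1
  | n + 1 => qchoose q n * (q - n) / (n + 1)

/-- Generalized binomial coefficient of an integer, as a complex number. -/
def zchoose (m : ℤ) (n : ℕ) : ℂ := ((qchoose (m : ℚ) n : ℚ) : ℂ)

/-- A vertex operator algebra over `ℂ`, encoded through its modes:
`Y u n : Module.End ℂ V` is the `n`-th mode `u_n` of the vertex operator `Y(u,z)`.
The axioms are: truncation, the vacuum and creation axioms, the (component form of
the) Jacobi/Borcherds identity, a lower-truncated `ℤ`-grading by `L(0)`-eigenvalues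
with finite dimensional homogeneous pieces compatible with the modes, the Virasoro
relations for the conformal vector and the `L(-1)`-derivative (translation) axiom. -/
structure VOA (V : Type) [AddCommGroup V] [Module ℂ V] : Type where
  Y : V →ₗ[ℂ] ℤ → Module.End ℂ V
  one : V
  omega : V
  wt : ℤ → Submodule ℂ V
  centralCharge : ℂ
  internal : DirectSum.IsInternal wt
  one_wt : one ∈ wt 0
  omega_wt : omega ∈ wt 2
  one_ne_zero : one ≠ 0
  fdim : ∀ n : ℤ, FiniteDimensional ℂ (wt n)
  bounded_below : ∃ N : ℤ, ∀ n : ℤ, n < N → wt n = ⊥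
  trunc : ∀ u v : V, ∃ N : ℤ, ∀ n : ℤ, N ≤ n → Y u n v = 0
  vacuum_act : ∀ n : ℤ, Y one n = if n = -1 then (1 : Module.End ℂ V) else 0
  create : ∀ u : V, Y u (-1) one = u
  create_ge : ∀ (u : V) (n : ℤ), 0 ≤ n → Y u n one = 0
  mode_wt : ∀ (k : ℤ) (u : V), u ∈ wt k → ∀ (m n : ℤ) (v : V), v ∈ wt m →
    Y u n v ∈ wt (m + k - n - 1)
  L0_diag : ∀ (n : ℤ) (v : V), v ∈ wt n → Y omega 1 v = (n : ℂ) • v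
  translation : ∀ (u : V) (n : ℤ), Y (Y omega 0 u) n = (-(n : ℂ)) • Y u (n - 1)
  virasoro : ∀ m n : ℤ,
    Y omega (m + 1) * Y omega (n + 1) - Y omega (n + 1) * Y omega (m + 1)
      = ((m : ℂ) - (n : ℂ)) • Y omega (m + n + 1)
        + (if m + n = 0 then (((m ^ 3 - m : ℤ) : ℂ) / 12) * centralCharge else 0)
            • (1 : Module.End ℂ V)
  borcherds : ∀ (u v w : V) (p m n : ℤ),
    ∑ᶠ i : ℕ, zchoose m i • Y (Y u (p + i) v) (m + n - i) w
      = ∑ᶠ i : ℕ, ((-1 : ℂ) ^ i * zchoose p i) •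
          (Y u (m + p - i) (Y v (n + i) w)
            - ((-1 : ℂ) ^ p) • Y v (n + p - i) (Y u (m + i) w))

variable {V : Type} [AddCommGroup V] [Module ℂ V]

/-- Simplicity of a vertex operator algebra: the only subspaces invariant under
all modes are `0` and the whole space. -/
def VOA.Simple (A : VOA V) : Prop :=
  ∀ U : Submodule ℂ V, (∀ (u : V) (n : ℤ) (v : V), v ∈ U → A.Y u n v ∈ U) → U = ⊥ ∨ U = ⊤

/-- The decomposition of a vertex operator algebra into its homogeneous pieces. -/
noncomputable def VOA.decompose (A : VOA V) : V ≃ₗ[ℂ] ⨁ n : ℤ, A.wt n :=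
  (LinearEquiv.ofBijective (DirectSum.coeLinearMap A.wt) A.internal).symm

/-- The homogeneous component of weight `n` of a vector. -/
noncomputable def VOA.hcomp (A : VOA V) (n : ℤ) (u : V) : V := (A.decompose u n : V)

/-- Zhu's product `u * v` for `u` (treated as) homogeneous of weight `k`:
`u*v = ∑_{i≥0} (k choose i) u_{i-1} v`. -/
noncomputable def VOA.mulAux (A : VOA V) (k : ℤ) (u v : V) : V :=
  ∑ᶠ i : ℕ, zchoose k i • A.Y u ((i : ℤ) - 1) v

/-- Zhu's circle product `u ∘ v` for `u` (treated as) homogeneous of weight `k`: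
`u∘v = ∑_{i≥0} (k choose i) u_{i-2} v`. -/
noncomputable def VOA.circAux (A : VOA V) (k : ℤ) (u v : V) : V :=
  ∑ᶠ i : ℕ, zchoose k i • A.Y u ((i : ℤ) - 2) v

/-- Zhu's product `u * v`, extended bilinearly via homogeneous components of `u`. -/
noncomputable def VOA.star (A : VOA V) (u v : V) : V :=
  ∑ᶠ k : ℤ, A.mulAux k (A.hcomp k u) v

/-- The subspace `O(V)` spanned by all circle products `u ∘ v` with `u` homogeneous;
Zhu's algebra is `A(V) = V/O(V)` with product induced by `VOA.star`. -/
def VOA.Osub (A : VOA V) : Submodule ℂ V :=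
  Submodule.span ℂ {w | ∃ (k : ℤ) (u v : V), u ∈ A.wt k ∧ w = A.circAux k u v}

/-- A weak module for a vertex operator algebra, given by modes satisfying
truncation, the vacuum axiom and the Borcherds identity. -/
structure WkMod (A : VOA V) (M : Type) [AddCommGroup M] [Module ℂ M] : Type where
  act : V →ₗ[ℂ] ℤ → Module.End ℂ M
  trunc : ∀ (u : V) (w : M), ∃ N : ℤ, ∀ n : ℤ, N ≤ n → act u n w = 0
  vacuum_act : ∀ n : ℤ, act A.one n = if n = -1 then (1 : Module.End ℂ M) else 0
  borcherds : ∀ (u v : V) (w : M) (p m n : ℤ),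
    ∑ᶠ i : ℕ, zchoose m i • act (A.Y u (p + i) v) (m + n - i) w
      = ∑ᶠ i : ℕ, ((-1 : ℂ) ^ i * zchoose p i) •
          (act u (m + p - i) (act v (n + i) w)
            - ((-1 : ℂ) ^ p) • act v (n + p - i) (act u (m + i) w))

/-- An admissible (`ℕ`-gradable) module for a vertex operator algebra:
a weak module with an `ℕ`-grading with nonzero top level, compatible with weights. -/
structure AdmMod (A : VOA V) (M : Type) [AddCommGroup M] [Module ℂ M]
    extends WkMod A M : Type where
  gr : ℕ → Submodule ℂ M
  grInternal : DirectSum.IsInternal gr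
  top_ne_bot : gr 0 ≠ ⊥
  gr_mode : ∀ (k : ℤ) (u : V), u ∈ A.wt k → ∀ (m : ℤ) (n : ℕ) (w : M), w ∈ gr n →
    act u m w ∈
      if 0 ≤ (n : ℤ) + k - m - 1 then gr ((n : ℤ) + k - m - 1).toNat else ⊥

/-- An ordinary module for a vertex operator algebra: a weak module on which `L(0)`
acts semisimply with finite dimensional eigenspaces whose weights are truncated from
below in each coset `λ + ℤ`. -/
structure OrdMod (A : VOA V) (M : Type) [AddCommGroup M] [Module ℂ M]
    extends WkMod A M : Type where
  wtm : ℂ → Submodule ℂ M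
  indep : iSupIndep wtm
  spans : ⨆ c : ℂ, wtm c = ⊤
  L0_diag : ∀ (c : ℂ) (w : M), w ∈ wtm c → act A.omega 1 w = c • w
  fdim : ∀ c : ℂ, FiniteDimensional ℂ (wtm c)
  bounded_below : ∀ c : ℂ, ∃ N : ℤ, ∀ m : ℤ, m < N → wtm (c + m) = ⊥

/-- Irreducibility of a weak module. -/
def WkMod.Irreducible {A : VOA V} {M : Type} [AddCommGroup M] [Module ℂ M]
    (P : WkMod A M) : Prop :=
  (∃ w : M, w ≠ 0) ∧
    ∀ U : Submodule ℂ M, (∀ (u : V) (n : ℤ) (w : M), w ∈ U → P.act u n w ∈ U) →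
      U = ⊥ ∨ U = ⊤

/-- Isomorphism of two weak modules over the same vertex operator algebra. -/
def ModIso (A : VOA V) {M N : Type} [AddCommGroup M] [Module ℂ M]
    [AddCommGroup N] [Module ℂ N] (P : WkMod A M) (Q : WkMod A N) : Prop :=
  ∃ f : M ≃ₗ[ℂ] N, ∀ (u : V) (n : ℤ) (w : M), f (P.act u n w) = Q.act u n (f w)

/-- The action of the zero-mode `o(u) = u_{wt u - 1}` (extended linearly from
homogeneous vectors) on a weak module; it preserves the top level of an
admissible module. -/
noncomputable def WkMod.oAct {A : VOA V} {M : Type} [AddCommGroup M] [Module ℂ M]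
    (Q : WkMod A M) (u : V) (w : M) : M :=
  ∑ᶠ k : ℤ, Q.act (A.hcomp k u) (k - 1) w

/-- Action of a word of creation operators `h_{a_1}(-n_1) ⋯ h_{a_k}(-n_k)`. -/
def wordAct {ℓ : ℕ} {M : Type} (f : Fin ℓ → ℤ → M → M) : List (Fin ℓ × ℕ+) → M → M
  | [], w => w
  | (a, n) :: L, w => f a (-((n : ℕ) : ℤ)) (wordAct f L w)

/-- Action of a word of twisted creation operators
`h_{a_1}(-n_1+1/2) ⋯ h_{a_k}(-n_k+1/2)` (indices doubled). -/
def twWordAct {ℓ : ℕ} {M : Type} (f : Fin ℓ → ℤ → M → M) : List (Fin ℓ × ℕ+) → M → M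
  | [], w => w
  | (a, n) :: L, w => f a (-(2 * ((n : ℕ) : ℤ) - 1)) (twWordAct f L w)

/-- `A` is the rank `ℓ` free bosonic (Heisenberg) vertex operator algebra
`𝓗 = M(1)`, with generators `hgen a = h_a(-1)𝟏` for an orthonormal basis
`h_1, …, h_ℓ` of `𝔥`: the generators have weight one, their modes satisfy the
Heisenberg commutation relations `[h_a(m), h_b(n)] = m δ_{ab} δ_{m+n,0}`, the
conformal vector is `ω = (1/2) ∑_a h_a(-1)²𝟏`, and `V` is spanned by the vectors
`h_{a_1}(-n_1) ⋯ h_{a_k}(-n_k)𝟏`. -/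
structure IsHeisenberg {ℓ : ℕ} (A : VOA V) (hgen : Fin ℓ → V) : Prop where
  wt_one : ∀ a, hgen a ∈ A.wt 1
  heis_comm : ∀ (a b : Fin ℓ) (m n : ℤ),
    A.Y (hgen a) m * A.Y (hgen b) n - A.Y (hgen b) n * A.Y (hgen a) m
      = (if a = b ∧ m + n = 0 then (m : ℂ) else 0) • (1 : Module.End ℂ V)
  omega_eq : A.omega
      = (1 / 2 : ℂ) • ∑ a : Fin ℓ, A.Y (hgen a) (-1) (A.Y (hgen a) (-1) A.one)
  span_words : Submodule.span ℂ
      {v : V | ∃ L : List (Fin ℓ × ℕ+),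
        v = wordAct (fun a k w => A.Y (hgen a) k w) L A.one} = ⊤

/-- `θ` is the automorphism of the free bosonic vertex operator algebra induced
by `-1` on `𝔥`. -/
structure IsThetaAut {ℓ : ℕ} (A : VOA V) (hgen : Fin ℓ → V) (θ : V ≃ₗ[ℂ] V) : Prop where
  map_one : θ A.one = A.one
  map_omega : θ A.omega = A.omega
  map_Y : ∀ (u : V) (n : ℤ) (v : V), θ (A.Y u n v) = A.Y (θ u) n (θ v)
  map_gen : ∀ a, θ (hgen a) = -hgen a
  map_wt : ∀ (k : ℤ) (v : V), v ∈ A.wt k → θ v ∈ A.wt k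

/-- `B` (with underlying space `W`, embedded in `V` by `ι`) is the fixed point
vertex operator subalgebra `V^θ` of the involution `θ`. -/
structure IsFixedSubVOA {W : Type} [AddCommGroup W] [Module ℂ W]
    (A : VOA V) (θ : V ≃ₗ[ℂ] V) (B : VOA W) (ι : W →ₗ[ℂ] V) : Prop where
  inj : Function.Injective ι
  range_eq : LinearMap.range ι
      = Module.End.eigenspace (θ.toLinearMap : Module.End ℂ V) 1
  map_one : ι B.one = A.one
  map_omega : ι B.omega = A.omega
  map_Y : ∀ (u : W) (n : ℤ) (v : W), ι (B.Y u n v) = A.Y (ι u) n (ι v)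
  map_wt : ∀ (k : ℤ) (w : W), w ∈ B.wt k ↔ ι w ∈ A.wt k

/-- `P` is (isomorphic to) the Fock module `M(1,λ)` over the rank `ℓ` Heisenberg
vertex operator algebra: it has a nonzero vector `v₀` with `h_a(n)v₀ = 0` for
`n ≥ 1`, `h_a(0)v₀ = λ_a v₀`, which generates `M` under the creation operators. -/
def IsFockModule {ℓ : ℕ} {M : Type} [AddCommGroup M] [Module ℂ M]
    (A : VOA V) (hgen : Fin ℓ → V) (P : WkMod A M) (lam : Fin ℓ → ℂ) : Prop :=
  ∃ v0 : M, v0 ≠ 0 ∧ (∀ (a : Fin ℓ) (n : ℤ), 1 ≤ n → P.act (hgen a) n v0 = 0) ∧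
    (∀ a : Fin ℓ, P.act (hgen a) 0 v0 = lam a • v0) ∧
    Submodule.span ℂ {w : M | ∃ L : List (Fin ℓ × ℕ+),
      w = wordAct (fun a k x => P.act (hgen a) k x) L v0} = ⊤

/-- A weak `θ`-twisted module (for an involution `θ`): the modes are indexed by
`(1/2)ℤ`, encoded here by doubling (so `act u k` is the mode `u_{k/2}`); on the
eigenspace `θ = (-1)^r` only modes with `k ≡ r (mod 2)` act, and the component
form of the twisted Jacobi identity holds. -/
structure TwMod (A : VOA V) (θ : V ≃ₗ[ℂ] V) (M : Type) [AddCommGroup M]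
    [Module ℂ M] : Type where
  act : V →ₗ[ℂ] ℤ → Module.End ℂ M
  trunc : ∀ (u : V) (w : M), ∃ N : ℤ, ∀ n : ℤ, N ≤ n → act u n w = 0
  vacuum_act : ∀ n : ℤ, act A.one n = if n = -2 then (1 : Module.End ℂ M) else 0
  moding : ∀ (u : V) (r : ℤ), θ u = ((-1 : ℂ) ^ r) • u →
    ∀ k : ℤ, (k - r) % 2 ≠ 0 → act u k = 0
  borcherds : ∀ (u v : V) (r s : ℤ), θ u = ((-1 : ℂ) ^ r) • u →
    θ v = ((-1 : ℂ) ^ s) • v → ∀ (w : M) (p K N : ℤ),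
    ∑ᶠ i : ℕ, ((qchoose ((K : ℚ) / 2) i : ℚ) : ℂ) • act (A.Y u (p + i) v) (K + N - 2 * i) w
      = ∑ᶠ i : ℕ, ((-1 : ℂ) ^ i * zchoose p i) •
          (act u (K + 2 * p - 2 * i) (act v (N + 2 * i) w)
            - ((-1 : ℂ) ^ p) • act v (N + 2 * p - 2 * i) (act u (K + 2 * i) w))

/-- Irreducibility of a twisted module. -/
def TwMod.Irreducible {A : VOA V} {θ : V ≃ₗ[ℂ] V} {M : Type} [AddCommGroup M]
    [Module ℂ M] (T : TwMod A θ M) : Prop :=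
  (∃ w : M, w ≠ 0) ∧
    ∀ U : Submodule ℂ M, (∀ (u : V) (k : ℤ) (w : M), w ∈ U → T.act u k w ∈ U) →
      U = ⊥ ∨ U = ⊤

/-- `T` is (isomorphic to) the canonical irreducible `θ`-twisted module
`𝓗(θ) = S(𝔥 ⊗ t^{-1/2}ℂ[t^{-1/2}])` of the rank `ℓ` free bosonic vertex operator
algebra: it has a nonzero vector killed by all modes `h_a(k/2)`, `k ≥ 1`, which
generates it under the twisted creation operators. -/
def IsCanonicalTwMod {ℓ : ℕ} {M : Type} [AddCommGroup M] [Module ℂ M]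
    (A : VOA V) (hgen : Fin ℓ → V) {θ : V ≃ₗ[ℂ] V} (T : TwMod A θ M) : Prop :=
  ∃ v0 : M, v0 ≠ 0 ∧ (∀ (a : Fin ℓ) (k : ℤ), 1 ≤ k → T.act (hgen a) k v0 = 0) ∧
    Submodule.span ℂ {w : M | ∃ L : List (Fin ℓ × ℕ+),
      w = twWordAct (fun a k x => T.act (hgen a) k x) L v0} = ⊤

/-- `σ` is the canonical involution of the twisted module `𝓗(θ)` (acting by
`(-1)^k` on monomials of length `k`): it is an involution compatible with `θ`
through the twisted action and fixing the lowest weight vectors. -/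
def TwInvolution {ℓ : ℕ} {M : Type} [AddCommGroup M] [Module ℂ M]
    (A : VOA V) (hgen : Fin ℓ → V) {θ : V ≃ₗ[ℂ] V} (T : TwMod A θ M)
    (σ : M ≃ₗ[ℂ] M) : Prop :=
  (∀ w : M, σ (σ w) = w) ∧
  (∀ (u : V) (k : ℤ) (w : M), σ (T.act u k w) = T.act (θ u) k (σ w)) ∧
  (∀ v0 : M, (∀ (a : Fin ℓ) (k : ℤ), 1 ≤ k → T.act (hgen a) k v0 = 0) → σ v0 = v0)

/-- The weak `B = V^θ`-module `Q` "is" the eigenspace `V^{(ε)}` of `θ` on `V`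
(e.g. `𝓗⁺` itself for `ε = 1` and `𝓗⁻` for `ε = -1`), with action obtained by
restricting the vertex operators of `V`. -/
def IsEigenPartModule {W N : Type} [AddCommGroup W] [Module ℂ W]
    [AddCommGroup N] [Module ℂ N] (A : VOA V) (θ : V ≃ₗ[ℂ] V) {B : VOA W}
    (ι : W →ₗ[ℂ] V) (ε : ℂ) (Q : WkMod B N) : Prop :=
  ∃ j : N →ₗ[ℂ] V, Function.Injective j ∧
    LinearMap.range j = Module.End.eigenspace (θ.toLinearMap : Module.End ℂ V) ε ∧
    ∀ (u : W) (n : ℤ) (w : N), j (Q.act u n w) = A.Y (ι u) n (j w)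

/-- The weak `B = V^θ`-module `Q` "is" the eigenspace `𝓗(θ)^{(ε)}` of the
involution `σ` on the twisted module `𝓗(θ)`, with the restricted twisted action
(`u ∈ V^θ` acts by its integral modes). -/
def IsTwEigenPartModule {W MT N : Type} [AddCommGroup W] [Module ℂ W]
    [AddCommGroup MT] [Module ℂ MT] [AddCommGroup N] [Module ℂ N]
    (A : VOA V) {θ : V ≃ₗ[ℂ] V} {B : VOA W} (ι : W →ₗ[ℂ] V)
    (T : TwMod A θ MT) (σ : MT ≃ₗ[ℂ] MT) (ε : ℂ) (Q : WkMod B N) : Prop :=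
  ∃ j : N →ₗ[ℂ] MT, Function.Injective j ∧
    LinearMap.range j = Module.End.eigenspace (σ.toLinearMap : Module.End ℂ MT) ε ∧
    ∀ (u : W) (n : ℤ) (w : N), j (Q.act u n w) = T.act (ι u) (2 * n) (j w)

/-- The weak `B = 𝓗⁺`-module `Q` "is" the restriction to `𝓗⁺` of the Fock module
`M(1,λ)`. -/
def IsFockRestriction {ℓ : ℕ} {W N : Type} [AddCommGroup W] [Module ℂ W]
    [AddCommGroup N] [Module ℂ N] (A : VOA V) (hgen : Fin ℓ → V) {B : VOA W}
    (ι : W →ₗ[ℂ] V) (lam : Fin ℓ → ℂ) (Q : WkMod B N) : Prop :=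
  ∃ P : WkMod A N, IsFockModule A hgen P lam ∧
    ∀ (u : W) (n : ℤ), Q.act u n = P.act (ι u) n

/-- A realization of Zhu's algebra `A(V) = V/O(V)` of a vertex operator algebra
as an abstract associative `ℂ`-algebra `R`. -/
structure ZhuRealization (A : VOA V) (R : Type) [Ring R] [Algebra ℂ R] : Type where
  π : V →ₗ[ℂ] R
  surj : Function.Surjective π
  ker_eq : LinearMap.ker π = A.Osub
  map_star : ∀ u v : V, π (A.star u v) = π u * π v
  map_one : π A.one = 1

/-- The `R = A(V)`-module `M` "is" the top level `N(0)` of the admissible module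
`N`, where `[u] ∈ A(V)` acts on the top level by the zero-mode `o(u)`. -/
def IsTopLevelOf {R : Type} [Ring R] [Algebra ℂ R] {A : VOA V}
    (Z : ZhuRealization A R) {N : Type} [AddCommGroup N] [Module ℂ N]
    (Qa : AdmMod A N) (M : Type) [AddCommGroup M] [Module R M] : Prop :=
  ∃ f : M →+ N, Function.Injective f ∧ (∀ m : M, f m ∈ Qa.gr 0) ∧
    (∀ w ∈ Qa.gr 0, ∃ m : M, f m = w) ∧
    ∀ (u : V) (m : M), f (Z.π u • m) = Qa.toWkMod.oAct u (f m)

/-- Iterated Zhu product of a list of elements (an empty product is `[𝟏]`). -/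
noncomputable def starList (A : VOA V) : List V → V
  | [] => A.one
  | x :: L => A.star x (starList A L)

/-- The linear span of all Zhu-monomials in a set of generators; modulo `O(V)`
this is the subalgebra of `A(V)` generated by the images of the generators. -/
def genMonomials (A : VOA V) (gens : Set V) : Submodule ℂ V :=
  Submodule.span ℂ {w : V | ∃ L : List V, (∀ g ∈ L, g ∈ gens) ∧ w = starList A L}

/-- The subspace `𝓦^α ⊆ 𝓗` spanned by the monomials
`h_{a_1}(-n_1) ⋯ h_{a_k}(-n_k)𝟏` whose number of letters from `𝓗_c` is odd
exactly for `c ∈ α`; thus `wordSpanV A hgen ∅ = 𝓦 = 𝓗₁⁺ ⊗ ⋯ ⊗ 𝓗_ℓ⁺`. -/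
def wordSpanV {ℓ : ℕ} (A : VOA V) (hgen : Fin ℓ → V) (α : Finset (Fin ℓ)) :
    Submodule ℂ V :=
  Submodule.span ℂ {v : V | ∃ L : List (Fin ℓ × ℕ+),
    (∀ c : Fin ℓ, c ∈ α ↔ ¬ Even ((L.map Prod.fst).count c)) ∧
    v = wordAct (fun a k w => A.Y (hgen a) k w) L A.one}

/-- The element `S_{ab}(m,n) = h_a(-m)h_b(-n)𝟏` of `𝓗`. -/
def SV {ℓ : ℕ} (A : VOA V) (hgen : Fin ℓ → V) (a b : Fin ℓ) (m n : ℤ) : V :=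
  A.Y (hgen a) (-m) (A.Y (hgen b) (-n) A.one)

/-- The element `ω_a = (1/2) h_a(-1)²𝟏` of `𝓗⁺`. -/
def omegaV {ℓ : ℕ} (A : VOA V) (hgen : Fin ℓ → V) (a : Fin ℓ) : V :=
  (1 / 2 : ℂ) • SV A hgen a a 1 1

/-- The element `J_a = h_a(-1)⁴𝟏 - 2h_a(-3)h_a(-1)𝟏 + (3/2)h_a(-2)²𝟏` of `𝓗⁺`. -/
def JV {ℓ : ℕ} (A : VOA V) (hgen : Fin ℓ → V) (a : Fin ℓ) : V :=
  A.Y (hgen a) (-1) (A.Y (hgen a) (-1) (A.Y (hgen a) (-1) (A.Y (hgen a) (-1) A.one)))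
    - (2 : ℂ) • SV A hgen a a 3 1 + (3 / 2 : ℂ) • SV A hgen a a 2 2

variable {W : Type} [AddCommGroup W] [Module ℂ W]

/-- `E^u_{ab}` (for `a ≠ b`), as a combination of the `S_{ab}(1,m)`. -/
def EuW {ℓ : ℕ} (s : Fin ℓ → Fin ℓ → ℤ → ℤ → W) (a b : Fin ℓ) : W :=
  (5 : ℂ) • s a b 1 2 + (25 : ℂ) • s a b 1 3 + (36 : ℂ) • s a b 1 4 + (16 : ℂ) • s a b 1 5

/-- `E^t_{ab}` (for `a ≠ b`), as a combination of the `S_{ab}(1,m)`. -/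
def EtW {ℓ : ℕ} (s : Fin ℓ → Fin ℓ → ℤ → ℤ → W) (a b : Fin ℓ) : W :=
  (-16 : ℂ) • ((3 : ℂ) • s a b 1 2 + (14 : ℂ) • s a b 1 3 + (19 : ℂ) • s a b 1 4
    + (8 : ℂ) • s a b 1 5)

/-- `Λ_{ab}` (for `a ≠ b`), as a combination of the `S_{ab}(1,m)`. -/
def LamW {ℓ : ℕ} (s : Fin ℓ → Fin ℓ → ℤ → ℤ → W) (a b : Fin ℓ) : W :=
  (45 : ℂ) • s a b 1 2 + (190 : ℂ) • s a b 1 3 + (240 : ℂ) • s a b 1 4 + (96 : ℂ) • s a b 1 5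

/-- The full setting of the paper: `A = 𝓗` is the rank `ℓ` free bosonic vertex
operator algebra with Heisenberg generators `hgen`, `θ` is its `-1` involution,
and `B = 𝓗⁺` is the fixed point vertex operator subalgebra, embedded by `ι`. -/
structure HeisenbergPlusSetting (ℓ : ℕ) (V W : Type) [AddCommGroup V] [Module ℂ V]
    [AddCommGroup W] [Module ℂ W] : Type where
  A : VOA V
  hgen : Fin ℓ → V
  heis : IsHeisenberg A hgen
  θ : V ≃ₗ[ℂ] V
  thetaAut : IsThetaAut A hgen θ
  B : VOA W
  ι : W →ₗ[ℂ] V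
  fixedSub : IsFixedSubVOA A θ B ι

/-- Bundled weak module over a vertex operator algebra. -/
structure ARep (A : VOA V) : Type 1 where
  carrier : Type
  [acg : AddCommGroup carrier]
  [mod : Module ℂ carrier]
  str : WkMod A carrier

attribute [instance] ARep.acg ARep.mod

/-- Bundled admissible module over a vertex operator algebra. -/
structure BRep (A : VOA V) : Type 1 where
  carrier : Type
  [acg : AddCommGroup carrier]
  [mod : Module ℂ carrier]
  adm : AdmMod A carrier

attribute [instance] BRep.acg BRep.mod

/-- Bundled twisted module over a vertex operator algebra with involution. -/
structure TwRep (A : VOA V) (θ : V ≃ₗ[ℂ] V) : Type 1 where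
  carrier : Type
  [acg : AddCommGroup carrier]
  [mod : Module ℂ carrier]
  str : TwMod A θ carrier

attribute [instance] TwRep.acg TwRep.mod

end

/-!
As a module for the Heisenberg algebra, a Fock module of highest weight `λ` is isomorphic to
the polynomial ring `ℂ[x_{a,n}]`, with `h_a(-n)` acting as multiplication by `x_{a,n}` and
`h_a(n)` as `n ∂/∂x_{a,n}`; in characteristic zero this module is irreducible, and any two
Fock modules of the same highest weight are isomorphic.

A subspace `U` of `M(1,λ)` stable under `𝓗⁺` is stable under the products `h_a(m) h_b(n)`,
which are combinations of modes of the `θ`-fixed vectors `h_a(k) h_b`. Since `h_b(0)` acts by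
`λ_b ≠ 0` for some `b`, `U` is stable under every `h_a(m)` and hence is `0` or everything.

Composing the `𝓗`-action on `M(1,-λ)` with `θ` gives a Fock module of highest weight `λ`, so an
`𝓗`-isomorphism `M(1,λ) ≅ M(1,-λ)∘θ` exists (it is determined on the Heisenberg generators and
propagates to all of `𝓗` through the iterate formula). It intertwines the `𝓗⁺`-actions because
`θ` fixes `𝓗⁺`.
-/

noncomputable section

theorem qchoose_zero_succ (n : ℕ) : qchoose 0 (n + 1) = 0 := by
  induction n with
  | zero => simp [qchoose]
  | succ n ih => rw [qchoose, ih, zero_mul, zero_div]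

theorem zchoose_zero_left {i : ℕ} (hi : i ≠ 0) : zchoose 0 i = 0 := by
  obtain ⟨n, rfl⟩ := Nat.exists_eq_succ_of_ne_zero hi
  simp [zchoose, qchoose_zero_succ]

theorem zchoose_zero_right (m : ℤ) : zchoose m 0 = 1 := by
  simp [zchoose, qchoose]

theorem zchoose_one_right (m : ℤ) : zchoose m 1 = m := by
  simp [zchoose, qchoose]

theorem finsum_nat_eq_zero_add {M : Type*} [AddCommMonoid M] {f : ℕ → M}
    (hf : (Function.support f).Finite) : ∑ᶠ i, f i = f 0 + ∑ᶠ i, f (i + 1) := by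
  obtain ⟨N, hN⟩ := hf.bddAbove
  rw [finsum_eq_sum_of_support_subset f (s := Finset.range (N + 1)) fun i hi => ?_,
    finsum_eq_sum_of_support_subset (fun i => f (i + 1)) (s := Finset.range N) fun i hi => ?_,
    Finset.sum_range_succ', add_comm]
  all_goals
    simp only [Finset.coe_range, Set.mem_Iio]
    have := hN hi
    omega

namespace MvPolynomial

variable {σ K : Type*} [Field K]

theorem totalDegree_pderiv_lt {i : σ} {p : MvPolynomial σ K} (h : pderiv i p ≠ 0) :
    (pderiv i p).totalDegree < p.totalDegree := by
  classical
  obtain ⟨m, hm, hdeg⟩ := Finset.exists_mem_eq_sup _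
    (support_nonempty.mpr h) fun s : σ →₀ ℕ => s.sum fun _ e => e
  have hcoeff : coeff (m + Finsupp.single i 1) p ≠ 0 := by
    intro h0
    rw [mem_support_iff, coeff_pderiv, h0, zero_mul] at hm
    exact hm rfl
  have := le_totalDegree (mem_support_iff.mpr hcoeff)
  rw [Finsupp.sum_add_index' (fun _ => rfl) (fun _ _ _ => rfl),
    Finsupp.sum_single_index rfl] at this
  rw [totalDegree, hdeg]
  omega

theorem exists_pderiv_ne_zero [CharZero K] {p : MvPolynomial σ K} (h : p.totalDegree ≠ 0) :
    ∃ i, pderiv i p ≠ 0 := by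
  classical
  obtain ⟨m, hm, hm0⟩ : ∃ m ∈ p.support, m ≠ 0 := by
    by_contra! hall
    refine h (totalDegree_eq_zero_iff_eq_C.mpr ?_)
    ext m
    rw [coeff_C]
    split_ifs with hm
    · rw [hm]
    · exact notMem_support_iff.mp fun hm' => hm (hall m hm').symm
  obtain ⟨i, hi⟩ := Finsupp.support_nonempty_iff.mpr hm0
  rw [Finsupp.mem_support_iff] at hi
  refine ⟨i, fun h0 => ?_⟩
  have hle : Finsupp.single i 1 ≤ m := by
    simpa [Finsupp.single_le_iff] using Nat.one_le_iff_ne_zero.mpr hi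
  have := coeff_pderiv (i := i) p (m - Finsupp.single i 1)
  rw [h0, coeff_zero, tsub_add_cancel_of_le hle] at this
  have hmi : (((m - Finsupp.single i 1 : σ →₀ ℕ) i : ℕ) : K) + 1 = m i := by
    rw [Finsupp.tsub_apply, Finsupp.single_eq_same]
    norm_cast; omega
  rw [hmi] at this
  exact mul_ne_zero (mem_support_iff.mp hm) (Nat.cast_ne_zero.mpr hi) this.symm

variable {U : Submodule K (MvPolynomial σ K)}

theorem one_mem_of_pderiv_mem [CharZero K] (hU : ∀ i p, p ∈ U → pderiv i p ∈ U)
    {p : MvPolynomial σ K} (hp : p ∈ U) (hp0 : p ≠ 0) : 1 ∈ U := by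
  induction hn : p.totalDegree using Nat.strong_induction_on generalizing p with
  | _ n ih =>
    by_cases hdeg : p.totalDegree = 0
    · have hC := totalDegree_eq_zero_iff_eq_C.mp hdeg
      have hc : p.coeff 0 ≠ 0 := fun h => hp0 (by rw [hC, h, C_0])
      have : (p.coeff 0)⁻¹ • p = 1 := by
        rw [hC, smul_eq_C_mul, ← C_mul, coeff_zero_C, inv_mul_cancel₀ hc, C_1]
      exact this ▸ U.smul_mem _ hp
    · obtain ⟨i, hi⟩ := exists_pderiv_ne_zero hdeg
      exact ih _ (hn ▸ totalDegree_pderiv_lt hi) (hU i p hp) hi rfl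

theorem eq_top_of_one_mem (hU : ∀ i p, p ∈ U → X i * p ∈ U) (h1 : 1 ∈ U) : U = ⊤ := by
  refine Submodule.eq_top_iff'.mpr fun p => ?_
  induction p using MvPolynomial.induction_on with
  | C a => simpa [smul_eq_C_mul] using U.smul_mem a h1
  | add p q hp hq => exact U.add_mem hp hq
  | mul_X p i hp => exact mul_comm p (X i) ▸ hU i p hp

theorem eq_bot_or_eq_top_of_X_mul_mem_of_pderiv_mem [CharZero K]
    (hX : ∀ i p, p ∈ U → X i * p ∈ U) (hD : ∀ i p, p ∈ U → pderiv i p ∈ U) : U = ⊥ ∨ U = ⊤ := by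
  refine or_iff_not_imp_left.mpr fun hU => eq_top_of_one_mem hX ?_
  obtain ⟨p, hp, hp0⟩ := Submodule.exists_mem_ne_zero_of_ne_bot hU
  exact one_mem_of_pderiv_mem hD hp hp0

end MvPolynomial

abbrev FockPoly (ℓ : ℕ) := MvPolynomial (Fin ℓ × ℕ+) ℂ

open MvPolynomial in
def fockMode {ℓ : ℕ} (lam : Fin ℓ → ℂ) (a : Fin ℓ) : ℤ → Module.End ℂ (FockPoly ℓ)
  | 0 => lam a • 1
  | (n + 1 : ℕ) => ((n + 1 : ℕ) : ℂ) • (pderiv (a, n.succPNat)).toLinearMap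
  | .negSucc n => LinearMap.mulLeft ℂ (X (a, n.succPNat))

structure FockRep (ℓ : ℕ) (lam : Fin ℓ → ℂ) (M : Type) [AddCommGroup M] [Module ℂ M] where
  mode : Fin ℓ → ℤ → Module.End ℂ M
  mode_comm : ∀ (a b : Fin ℓ) (m n : ℤ) (w : M),
    mode a m (mode b n w)
      = mode b n (mode a m w) + (if a = b ∧ m + n = 0 then (m : ℂ) else 0) • w
  vac : M
  vac_ne_zero : vac ≠ 0
  mode_vac_of_pos : ∀ (a : Fin ℓ) (n : ℤ), 1 ≤ n → mode a n vac = 0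
  mode_zero_vac : ∀ a : Fin ℓ, mode a 0 vac = lam a • vac
  span_words : Submodule.span ℂ {w : M | ∃ L : List (Fin ℓ × ℕ+),
    w = wordAct (fun a k x => mode a k x) L vac} = ⊤

namespace FockRep

open MvPolynomial
open scoped IsMulCommutative

variable {ℓ : ℕ} {lam : Fin ℓ → ℂ} {M : Type} [AddCommGroup M] [Module ℂ M]
  (R : FockRep ℓ lam M)

def creation (x : Fin ℓ × ℕ+) : Module.End ℂ M := R.mode x.1 (-(x.2 : ℤ))

theorem creation_commute (x y : Fin ℓ × ℕ+) : Commute (R.creation x) (R.creation y) := by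
  ext w
  have hxy : ¬(x.1 = y.1 ∧ -((x.2 : ℕ) : ℤ) + -((y.2 : ℕ) : ℤ) = 0) := by
    have := x.2.pos; omega
  rw [Module.End.mul_apply, Module.End.mul_apply, creation, creation, R.mode_comm, if_neg hxy,
    zero_smul, add_zero]

def creationAlgebra : Subalgebra ℂ (Module.End ℂ M) := Algebra.adjoin ℂ (Set.range R.creation)

instance : IsMulCommutative R.creationAlgebra :=
  Algebra.isMulCommutative_adjoin ℂ <| by
    rintro _ ⟨x, rfl⟩ _ ⟨y, rfl⟩
    exact R.creation_commute x y

def ofPoly : FockPoly ℓ →ₗ[ℂ] M :=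
  LinearMap.applyₗ R.vac ∘ₗ R.creationAlgebra.val.toLinearMap ∘ₗ (aeval fun x =>
    (⟨R.creation x, Algebra.subset_adjoin ⟨x, rfl⟩⟩ : R.creationAlgebra)).toLinearMap

theorem ofPoly_X_mul (x : Fin ℓ × ℕ+) (p : FockPoly ℓ) :
    R.ofPoly (X x * p) = R.creation x (R.ofPoly p) := by
  simp [ofPoly]

theorem ofPoly_C (c : ℂ) : R.ofPoly (C c) = c • R.vac := by
  simp [ofPoly]

theorem ofPoly_one : R.ofPoly 1 = R.vac := by
  simpa using R.ofPoly_C 1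

theorem mode_zero_ofPoly (a : Fin ℓ) (p : FockPoly ℓ) :
    R.mode a 0 (R.ofPoly p) = lam a • R.ofPoly p := by
  induction p using MvPolynomial.induction_on with
  | C c => rw [ofPoly_C, map_smul, R.mode_zero_vac, smul_comm]
  | add p q hp hq => rw [map_add, map_add, hp, hq, smul_add]
  | mul_X p x hp =>
    have hx : ¬(a = x.1 ∧ (0 : ℤ) + -((x.2 : ℕ) : ℤ) = 0) := by
      have := x.2.pos; omega
    rw [mul_comm, ofPoly_X_mul, creation, R.mode_comm, if_neg hx, zero_smul, add_zero, hp,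
      map_smul]

theorem mode_ofPoly_of_pos (a : Fin ℓ) (n : ℕ+) (p : FockPoly ℓ) :
    R.mode a n (R.ofPoly p) = (n : ℂ) • R.ofPoly (pderiv (a, n) p) := by
  induction p using MvPolynomial.induction_on with
  | C c =>
    rw [ofPoly_C, map_smul, R.mode_vac_of_pos _ _ (by exact_mod_cast n.pos), pderiv_C,
      map_zero, smul_zero, smul_zero]
  | add p q hp hq => rw [map_add, map_add, hp, hq, map_add, map_add, smul_add]
  | mul_X p x hp =>
    rw [mul_comm, ofPoly_X_mul, creation, R.mode_comm, hp, pderiv_mul, map_add, smul_add,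
      ofPoly_X_mul, map_smul, creation]
    by_cases hx : x = (a, n)
    · subst hx
      rw [if_pos ⟨rfl, by ring⟩, pderiv_X_self, one_mul, Int.cast_natCast, add_comm]
    · have hx' : ¬(a = x.1 ∧ ((n : ℕ) : ℤ) + -((x.2 : ℕ) : ℤ) = 0) := by
        rintro ⟨ha, h⟩
        exact hx (Prod.ext ha.symm (PNat.coe_injective (by dsimp only; omega)))
      rw [if_neg hx', pderiv_X_of_ne hx, zero_mul, map_zero, smul_zero, zero_smul, add_zero,
        zero_add]

theorem ofPoly_surjective : Function.Surjective R.ofPoly := by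
  rw [← LinearMap.range_eq_top, eq_top_iff, ← R.span_words, Submodule.span_le]
  rintro _ ⟨L, rfl⟩
  induction L with
  | nil => exact ⟨1, R.ofPoly_one⟩
  | cons x L ih =>
    obtain ⟨p, hp⟩ := ih
    exact ⟨X x * p, by rw [ofPoly_X_mul, hp]; rfl⟩

theorem comap_ofPoly_eq_bot_or_eq_top (U : Submodule ℂ M)
    (hU : ∀ (a : Fin ℓ) (k : ℤ) (w : M), w ∈ U → R.mode a k w ∈ U) :
    U.comap R.ofPoly = ⊥ ∨ U.comap R.ofPoly = ⊤ := by
  refine eq_bot_or_eq_top_of_X_mul_mem_of_pderiv_mem (fun x p hp => ?_) (fun x p hp => ?_)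
  · rw [Submodule.mem_comap, ofPoly_X_mul]
    exact hU _ _ _ hp
  · have hn : ((x.2 : ℕ) : ℂ) ≠ 0 := by exact_mod_cast x.2.ne_zero
    rw [Submodule.mem_comap, ← inv_smul_smul₀ hn (R.ofPoly _), ← mode_ofPoly_of_pos]
    exact U.smul_mem _ (hU _ _ _ hp)

theorem ofPoly_injective : Function.Injective R.ofPoly := by
  rw [← LinearMap.ker_eq_bot]
  refine (R.comap_ofPoly_eq_bot_or_eq_top ⊥ fun a k w hw => ?_).resolve_right fun h => ?_
  · rw [Submodule.mem_bot] at hw ⊢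
    rw [hw, map_zero]
  · apply R.vac_ne_zero
    rw [← R.ofPoly_one, ← Submodule.mem_bot ℂ, ← Submodule.mem_comap, h]
    trivial

theorem eq_bot_or_eq_top (U : Submodule ℂ M)
    (hU : ∀ (a : Fin ℓ) (k : ℤ) (w : M), w ∈ U → R.mode a k w ∈ U) : U = ⊥ ∨ U = ⊤ := by
  rw [← Submodule.map_comap_eq_of_surjective R.ofPoly_surjective U]
  rcases R.comap_ofPoly_eq_bot_or_eq_top U hU with h | h
  · exact .inl (by rw [h, Submodule.map_bot])
  · exact .inr (by rw [h, Submodule.map_top, LinearMap.range_eq_top.mpr R.ofPoly_surjective])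

theorem mode_zero (a : Fin ℓ) (w : M) : R.mode a 0 w = lam a • w := by
  obtain ⟨p, rfl⟩ := R.ofPoly_surjective w
  exact R.mode_zero_ofPoly a p

theorem mode_ofPoly (a : Fin ℓ) (k : ℤ) (p : FockPoly ℓ) :
    R.mode a k (R.ofPoly p) = R.ofPoly (fockMode lam a k p) := by
  rcases k with (_ | n) | n
  · exact (R.mode_zero_ofPoly a p).trans (map_smul R.ofPoly (lam a) p).symm
  · exact R.mode_ofPoly_of_pos a n.succPNat p |>.trans (map_smul R.ofPoly _ _).symm
  · exact (R.ofPoly_X_mul (a, n.succPNat) p).symm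

theorem exists_linearEquiv {N : Type} [AddCommGroup N] [Module ℂ N] (R' : FockRep ℓ lam N) :
    ∃ g : M ≃ₗ[ℂ] N, ∀ (a : Fin ℓ) (k : ℤ) (w : M), g (R.mode a k w) = R'.mode a k (g w) := by
  let e := LinearEquiv.ofBijective R.ofPoly ⟨R.ofPoly_injective, R.ofPoly_surjective⟩
  let e' := LinearEquiv.ofBijective R'.ofPoly ⟨R'.ofPoly_injective, R'.ofPoly_surjective⟩
  have he : ∀ p, (e.symm.trans e') (R.ofPoly p) = R'.ofPoly p := fun p => by
    change e' (e.symm (e p)) = _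
    rw [e.symm_apply_apply]
    rfl
  refine ⟨e.symm.trans e', fun a k w => ?_⟩
  obtain ⟨p, rfl⟩ := R.ofPoly_surjective w
  rw [mode_ofPoly, he, he, mode_ofPoly]

end FockRep

variable {V : Type} [AddCommGroup V] [Module ℂ V] {A : VOA V}
  {M : Type} [AddCommGroup M] [Module ℂ M] {N : Type} [AddCommGroup N] [Module ℂ N]
  {ℓ : ℕ} {hgen : Fin ℓ → V}

namespace WkMod

variable (P : WkMod A M)

theorem finite_setOf_act_ne_zero (u : V) (w : M) (c : ℤ) :
    {i : ℕ | P.act u (c + i) w ≠ 0}.Finite := by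
  obtain ⟨K, hK⟩ := P.trunc u w
  refine (Set.finite_lt_nat (K - c).toNat).subset fun i hi => ?_
  by_contra h
  exact hi (hK _ (by simp only [Set.mem_ofPred_eq, not_lt] at h; omega))

theorem act_Y (u v : V) (p n : ℤ) (w : M) :
    P.act (A.Y u p v) n w = ∑ᶠ i : ℕ, ((-1 : ℂ) ^ i * zchoose p i) •
      (P.act u (p - i) (P.act v (n + i) w)
        - ((-1 : ℂ) ^ p) • P.act v (n + p - i) (P.act u i w)) := by
  have H := P.borcherds u v w p 0 n
  rw [finsum_eq_single _ 0 fun i hi => by rw [zchoose_zero_left hi, zero_smul]] at H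
  simpa [zchoose_zero_right] using H

theorem act_comm (u v : V) (m n : ℤ) (w : M) :
    P.act u m (P.act v n w) - P.act v n (P.act u m w)
      = ∑ᶠ i : ℕ, zchoose m i • P.act (A.Y u i v) (m + n - i) w := by
  have H := P.borcherds u v w 0 m n
  rw [finsum_eq_single (fun i : ℕ => ((-1 : ℂ) ^ i * zchoose 0 i) • _) 0
    fun i hi => by rw [zchoose_zero_left hi, mul_zero, zero_smul]] at H
  simpa [zchoose_zero_right] using H.symm

theorem finite_support_act_Y_summand (u v : V) (p n : ℤ) (w : M) :
    (Function.support fun i : ℕ => ((-1 : ℂ) ^ i * zchoose p i) •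
      (P.act u (p - i) (P.act v (n + i) w)
        - ((-1 : ℂ) ^ p) • P.act v (n + p - i) (P.act u i w))).Finite := by
  refine ((P.finite_setOf_act_ne_zero v w n).union
    (by simpa using P.finite_setOf_act_ne_zero u w 0)).subset fun i hi => ?_
  by_contra h
  simp only [Set.mem_union, Set.mem_ofPred_eq, not_or, not_not] at h
  rw [Function.mem_support] at hi
  exact hi (by rw [h.1, h.2, map_zero, map_zero, smul_zero, sub_zero, smul_zero])

def intertwinedBy (P' : WkMod A N) (g : M →ₗ[ℂ] N) : Submodule ℂ V where
  carrier := {u | ∀ n w, g (P.act u n w) = P'.act u n (g w)}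
  add_mem' {u v} hu hv n w := by
    simp only [map_add, Pi.add_apply, LinearMap.add_apply, hu n w, hv n w]
  zero_mem' n w := by simp only [map_zero, Pi.zero_apply, LinearMap.zero_apply]
  smul_mem' c u hu n w := by
    simp only [map_smul, Pi.smul_apply, LinearMap.smul_apply, hu n w]

theorem Y_mem_intertwinedBy {P' : WkMod A N} {g : M →ₗ[ℂ] N} {u v : V}
    (hu : u ∈ P.intertwinedBy P' g) (hv : v ∈ P.intertwinedBy P' g) (p : ℤ) :
    A.Y u p v ∈ P.intertwinedBy P' g := fun n w => by
  rw [act_Y, act_Y, map_finsum g (P.finite_support_act_Y_summand u v p n w)]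
  refine finsum_congr fun i => ?_
  rw [map_smul, map_sub, map_smul, hu, hv, hv, hu]

/-- Borcherds' identity with `m := K`, where `u_{K+i} w = 0` for all `i ≥ 0`, expresses
`u_m v_n w` through modes of the iterates `u_k v` applied to `w` and the terms
`u_{m-i} v_{n+i} w` with `i ≥ 1`. -/
theorem act_act_mem_of_forall_succ (u v : V) (w : M) (S : Submodule ℂ M)
    (hS : ∀ k j, P.act (A.Y u k v) j w ∈ S) {n : ℤ}
    (hn : ∀ (i : ℕ) (m : ℤ), P.act u m (P.act v (n + (i + 1 : ℕ)) w) ∈ S) (m : ℤ) :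
    P.act u m (P.act v n w) ∈ S := by
  obtain ⟨K, hK⟩ := P.trunc u w
  have H := P.borcherds u v w (m - K) K n
  have hR : (∑ᶠ i : ℕ, ((-1 : ℂ) ^ i * zchoose (m - K) i) •
      (P.act u (K + (m - K) - i) (P.act v (n + i) w)
        - ((-1 : ℂ) ^ (m - K)) • P.act v (n + (m - K) - i) (P.act u (K + i) w)))
      = ∑ᶠ i : ℕ, ((-1 : ℂ) ^ i * zchoose (m - K) i) • P.act u (m - i) (P.act v (n + i) w) :=
    finsum_congr fun i => by
      rw [hK (K + i) (by omega), map_zero, smul_zero, sub_zero, add_sub_cancel]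
  have hfin : (Function.support fun i : ℕ =>
      ((-1 : ℂ) ^ i * zchoose (m - K) i) • P.act u (m - i) (P.act v (n + i) w)).Finite :=
    (P.finite_setOf_act_ne_zero v w n).subset fun i hi h =>
      hi (by simp only [h, map_zero, smul_zero])
  have hsum : ∀ {f : ℕ → M}, (∀ i, f i ∈ S) → ∑ᶠ i, f i ∈ S := fun hf =>
    finsum_induction _ S.zero_mem (fun _ _ => S.add_mem) hf
  have hL := hsum fun i => S.smul_mem (zchoose K i) (hS (m - K + i) (K + n - i))
  rw [H, hR, finsum_nat_eq_zero_add hfin,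
    S.add_mem_iff_left (hsum fun i => S.smul_mem _ (hn i _))] at hL
  simpa [zchoose_zero_right] using hL

theorem act_act_mem (u v : V) (w : M) (S : Submodule ℂ M)
    (hS : ∀ k j, P.act (A.Y u k v) j w ∈ S) (m n : ℤ) : P.act u m (P.act v n w) ∈ S := by
  obtain ⟨N, hN⟩ := P.trunc v w
  suffices ∀ n' ≤ N, ∀ n ≥ n', ∀ m, P.act u m (P.act v n w) ∈ S from
    this (min n N) (min_le_right _ _) n (min_le_left _ _) m
  intro n' hn'
  induction n', hn' using Int.leInductionDown with
  | base => exact fun n hn m => by rw [hN n hn, map_zero]; exact S.zero_mem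
  | pred k _ ih =>
    intro n hn m
    rcases hn.lt_or_eq with hlt | rfl
    · exact ih n (by omega) m
    · exact P.act_act_mem_of_forall_succ u v w S hS (fun i m => ih _ (by omega) m) m

def precomp (θ : V ≃ₗ[ℂ] V) (h1 : θ A.one = A.one)
    (hY : ∀ (u : V) (n : ℤ) (v : V), θ (A.Y u n v) = A.Y (θ u) n (θ v)) : WkMod A M where
  act := P.act ∘ₗ θ.toLinearMap
  trunc u w := P.trunc (θ u) w
  vacuum_act n := by simpa [h1] using P.vacuum_act n
  borcherds u v w p m n := by simpa [hY] using P.borcherds (θ u) (θ v) w p m n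

end WkMod

theorem wordAct_neg (f : Fin ℓ → ℤ → Module.End ℂ M) (L : List (Fin ℓ × ℕ+)) (w : M) :
    wordAct (fun a k x => (-f a k) x) L w
      = (-1 : ℂ) ^ L.length • wordAct (fun a k x => f a k x) L w := by
  induction L with
  | nil => rw [List.length_nil, pow_zero, one_smul]; rfl
  | cons x L ih =>
    obtain ⟨a, n⟩ := x
    rw [wordAct, wordAct, ih, LinearMap.neg_apply, map_smul, List.length_cons, pow_succ, mul_smul,
      neg_one_smul, smul_neg]

namespace IsHeisenberg

theorem Y_hgen_hgen (heis : IsHeisenberg A hgen) (a b : Fin ℓ) (i : ℕ) :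
    A.Y (hgen a) i (hgen b) = if a = b ∧ i = 1 then A.one else 0 := by
  have h := LinearMap.congr_fun (heis.heis_comm a b i (-1)) A.one
  rw [LinearMap.sub_apply, Module.End.mul_apply, Module.End.mul_apply, A.create,
    A.create_ge (hgen a) _ (by positivity), map_zero, sub_zero, LinearMap.smul_apply,
    Module.End.one_apply] at h
  rw [h]
  by_cases hab : a = b
  · by_cases hi : i = 1
    · subst hi
      simp [hab]
    · rw [if_neg (fun h => hi (by omega)), if_neg (fun h => hi h.2), zero_smul]
  · rw [if_neg (fun h => hab h.1), if_neg (fun h => hab h.1), zero_smul]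

theorem act_hgen_comm (heis : IsHeisenberg A hgen) (P : WkMod A M) (a b : Fin ℓ) (m n : ℤ)
    (w : M) :
    P.act (hgen a) m (P.act (hgen b) n w)
      = P.act (hgen b) n (P.act (hgen a) m w)
        + (if a = b ∧ m + n = 0 then (m : ℂ) else 0) • w := by
  rw [← sub_eq_iff_eq_add', P.act_comm, finsum_eq_single _ 1 fun i hi => by
    rw [heis.Y_hgen_hgen, if_neg fun h => hi h.2, map_zero, Pi.zero_apply, LinearMap.zero_apply,
      smul_zero]]
  rw [heis.Y_hgen_hgen, zchoose_one_right]
  by_cases hab : a = b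
  · rw [if_pos ⟨hab, rfl⟩, P.vacuum_act]
    by_cases hmn : m + n = 0
    · rw [if_pos (by push_cast; omega), if_pos ⟨hab, hmn⟩, Module.End.one_apply]
    · rw [if_neg (by push_cast; omega), if_neg fun h => hmn h.2, LinearMap.zero_apply, smul_zero,
        zero_smul]
  · rw [if_neg fun h => hab h.1, if_neg fun h => hab h.1, map_zero, Pi.zero_apply,
      LinearMap.zero_apply, smul_zero, zero_smul]

theorem eq_top_of_Y_mem (heis : IsHeisenberg A hgen) (S : Submodule ℂ V) (hone : A.one ∈ S)
    (hgen_mem : ∀ a, hgen a ∈ S) (hY : ∀ u ∈ S, ∀ v ∈ S, ∀ n, A.Y u n v ∈ S) : S = ⊤ := by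
  rw [eq_top_iff, ← heis.span_words, Submodule.span_le]
  rintro _ ⟨L, rfl⟩
  induction L with
  | nil => exact hone
  | cons x L ih => exact hY _ (hgen_mem x.1) _ ih _

end IsHeisenberg

theorem IsFixedSubVOA.mem_range_iff {W : Type} [AddCommGroup W] [Module ℂ W] {θ : V ≃ₗ[ℂ] V}
    {B : VOA W} {ι : W →ₗ[ℂ] V} (h : IsFixedSubVOA A θ B ι) {v : V} :
    v ∈ LinearMap.range ι ↔ θ v = v := by
  rw [h.range_eq, Module.End.mem_eigenspace_iff, one_smul]
  rfl

namespace IsFockModule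

variable {P : WkMod A M} {lam : Fin ℓ → ℂ}

def toFockRep (heis : IsHeisenberg A hgen) (hP : IsFockModule A hgen P lam) :
    FockRep ℓ lam M where
  mode a := P.act (hgen a)
  mode_comm := heis.act_hgen_comm P
  vac := hP.choose
  vac_ne_zero := hP.choose_spec.1
  mode_vac_of_pos := hP.choose_spec.2.1
  mode_zero_vac := hP.choose_spec.2.2.1
  span_words := hP.choose_spec.2.2.2

theorem eq_bot_or_eq_top_of_fixed (heis : IsHeisenberg A hgen) {θ : V ≃ₗ[ℂ] V}
    (hθ : IsThetaAut A hgen θ) (hP : IsFockModule A hgen P lam) (hlam : lam ≠ 0)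
    (U : Submodule ℂ M) (hU : ∀ v, θ v = v → ∀ (n : ℤ), ∀ w ∈ U, P.act v n w ∈ U) :
    U = ⊥ ∨ U = ⊤ := by
  obtain ⟨a₀, ha₀⟩ : ∃ a, lam a ≠ 0 := Function.ne_iff.mp hlam
  have hfixed : ∀ a k, θ (A.Y (hgen a) k (hgen a₀)) = A.Y (hgen a) k (hgen a₀) := fun a k => by
    simp only [hθ.map_Y, hθ.map_gen, map_neg, Pi.neg_apply, LinearMap.neg_apply, neg_neg]
  refine (hP.toFockRep heis).eq_bot_or_eq_top U fun a k w hw => ?_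
  rw [← inv_smul_smul₀ ha₀ w, ← (hP.toFockRep heis).mode_zero a₀ w, map_smul]
  exact U.smul_mem _ (P.act_act_mem _ _ w U (fun k j => hU _ (hfixed a k) j w hw) k 0)

theorem precomp {θ : V ≃ₗ[ℂ] V} (hθ : IsThetaAut A hgen θ)
    (hP : IsFockModule A hgen P (-lam)) :
    IsFockModule A hgen (P.precomp θ hθ.map_one hθ.map_Y) lam := by
  obtain ⟨v₀, hv₀, hpos, hzero, hspan⟩ := hP
  have hact : ∀ a, (P.precomp θ hθ.map_one hθ.map_Y).act (hgen a) = -P.act (hgen a) := by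
    intro a
    change P.act (θ (hgen a)) = _
    rw [hθ.map_gen, map_neg]
  refine ⟨v₀, hv₀, fun a n hn => ?_, fun a => ?_, ?_⟩
  · rw [hact, Pi.neg_apply, LinearMap.neg_apply, hpos a n hn, neg_zero]
  · rw [hact, Pi.neg_apply, LinearMap.neg_apply, hzero, Pi.neg_apply, neg_smul, neg_neg]
  · simp only [hact, Pi.neg_apply]
    rw [eq_top_iff, ← hspan, Submodule.span_le]
    rintro _ ⟨L, rfl⟩
    have hL := wordAct_neg (fun a k => -P.act (hgen a) k) L v₀
    simp only [neg_neg] at hL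
    rw [hL]
    exact Submodule.smul_mem _ _ (Submodule.subset_span ⟨L, rfl⟩)

theorem modIso (heis : IsHeisenberg A hgen) (hP : IsFockModule A hgen P lam) {P' : WkMod A N}
    (hP' : IsFockModule A hgen P' lam) : ModIso A P P' := by
  obtain ⟨g, hg⟩ := (hP.toFockRep heis).exists_linearEquiv (hP'.toFockRep heis)
  have hone : A.one ∈ P.intertwinedBy P' g.toLinearMap := fun n w => by
    rw [P.vacuum_act, P'.vacuum_act]
    split_ifs
    · rfl
    · exact map_zero g
  have htop : P.intertwinedBy P' g.toLinearMap = ⊤ :=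
    heis.eq_top_of_Y_mem _ hone (fun a => hg a)
      fun u hu v hv n => P.Y_mem_intertwinedBy hu hv n
  exact ⟨g, fun u => (htop ▸ Submodule.mem_top : u ∈ P.intertwinedBy P' g.toLinearMap)⟩

end IsFockModule

end

/-- Proposition 2.5. If `λ ≠ 0` then the Fock module `M(1,λ)`
(restricted to `𝓗⁺` along `ι`) is an irreducible `𝓗⁺`-module, and `M(1,λ)` and
`M(1,-λ)` are isomorphic as `𝓗⁺`-modules. -/
theorem statement3 (ℓ : ℕ) {V W : Type} [AddCommGroup V] [Module ℂ V]
    [AddCommGroup W] [Module ℂ W] (S : HeisenbergPlusSetting ℓ V W)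
    (lam : Fin ℓ → ℂ) (hlam : lam ≠ 0) :
    (∀ (M : Type) [AddCommGroup M] [Module ℂ M] (Q : WkMod S.B M),
      IsFockRestriction S.A S.hgen S.ι lam Q → Q.Irreducible) ∧
    (∀ (M N : Type) [AddCommGroup M] [Module ℂ M] [AddCommGroup N] [Module ℂ N]
      (Q : WkMod S.B M) (Q' : WkMod S.B N),
      IsFockRestriction S.A S.hgen S.ι lam Q →
      IsFockRestriction S.A S.hgen S.ι (-lam) Q' →
      ModIso S.B Q Q') := by
  refine ⟨fun M _ _ Q ⟨P, hP, hQ⟩ => ⟨?_, fun U hU => ?_⟩,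
    fun M N _ _ _ _ Q Q' ⟨P, hP, hQ⟩ ⟨P', hP', hQ'⟩ => ?_⟩
  · obtain ⟨v₀, hv₀, -⟩ := hP
    exact ⟨v₀, hv₀⟩
  · refine hP.eq_bot_or_eq_top_of_fixed S.heis S.thetaAut hlam U fun v hv n w hw => ?_
    obtain ⟨u, rfl⟩ := S.fixedSub.mem_range_iff.mpr hv
    rw [← hQ]
    exact hU u n w hw
  · obtain ⟨g, hg⟩ := hP.modIso S.heis (hP'.precomp S.thetaAut)
    refine ⟨g, fun u n w => ?_⟩
    rw [hQ, hQ', hg]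
    change P'.act (S.θ (S.ι u)) n (g w) = _
    rw [S.fixedSub.mem_range_iff.mp ⟨u, rfl⟩]
end

section
/- Let a ≠ b, α = {a,b}, and let 𝒮_{ab} ⊆ A(𝓗^+) be the span of the elements S_{ab}(m,n) + O(𝓗^+) for m,n ∈ ℤ₊. Then A[𝓦^α] = 𝒮_{ab}·A[𝓦] and A[𝓦^α] = A[𝓦]·𝒮_{ab}; that is, A[𝓦^α] is generated by 𝒮_{ab} both as a right and as a left A[𝓦]-module. -/
/-!
Common framework: vertex operator algebras over ℂ encoded via their modes,
weak/admissible/ordinary modules, twisted modules, Zhu's algebra data,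
and the free bosonic (Heisenberg) vertex operator algebra `𝓗 = M(1)` of rank `ℓ`
together with its `θ`-fixed subalgebra `𝓗⁺`.
-/

open scoped BigOperators DirectSum TensorProduct

noncomputable section
namespace StT8

set_option linter.unusedSectionVars false

open Function

variable {V : Type} [AddCommGroup V] [Module ℂ V]

lemma finsum_mem_submodule {α : Type} {p : Submodule ℂ V} (f : α → V)
    (h : ∀ i, f i ∈ p) : ∑ᶠ i, f i ∈ p := by
  by_cases hf : (Function.support f).Finite
  · rw [finsum_eq_sum f hf]
    exact Submodule.sum_mem _ fun i _ => h i
  · rw [finsum_of_infinite_support hf]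
    exact p.zero_mem

lemma map_finsum_linear {W : Type} [AddCommGroup W] [Module ℂ W]
    (g : V →ₗ[ℂ] W) {α : Type} (f : α → V) (hf : (Function.support f).Finite) :
    g (∑ᶠ i, f i) = ∑ᶠ i, g (f i) := by
  rw [finsum_eq_sum f hf, map_sum]
  refine (finsum_eq_finset_sum_of_support_subset _ ?_).symm
  intro i hi
  simp only [Function.mem_support] at hi ⊢
  simp only [Set.Finite.coe_toFinset, Function.mem_support]
  intro h0
  exact hi (by rw [h0, map_zero])

lemma support_finite_of_bound (f : ℕ → V) (N : ℕ) (h : ∀ i, N ≤ i → f i = 0) :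
    (Function.support f).Finite := by
  refine Set.Finite.subset (Set.finite_lt_nat N) ?_
  intro i hi
  simp only [Function.mem_support] at hi
  simp only [Set.mem_setOf_eq]
  by_contra hc
  exact hi (h i (by omega))

lemma finsum_split_zero (f : ℕ → V) (hf : (Function.support f).Finite) :
    ∑ᶠ i, f i = f 0 + ∑ᶠ i, (if i = 0 then 0 else f i) := by
  have hrep : f = (fun i => if i = 0 then f i else 0) + fun i => if i = 0 then 0 else f i := by
    funext i
    by_cases h : i = 0 <;> simp [h]
  have h1 : (Function.support fun i => if i = 0 then f i else 0).Finite := by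
    refine Set.Finite.subset hf ?_
    intro i hi
    simp only [Function.mem_support] at hi ⊢
    by_cases h : i = 0
    · rw [if_pos h] at hi; exact hi
    · rw [if_neg h] at hi; exact absurd rfl hi
  have h2 : (Function.support fun i => if i = 0 then 0 else f i).Finite := by
    refine Set.Finite.subset hf ?_
    intro i hi
    simp only [Function.mem_support] at hi ⊢
    by_cases h : i = 0
    · rw [if_pos h] at hi; exact absurd rfl hi
    · rw [if_neg h] at hi; exact hi
  have step1 : ∑ᶠ i, f i = ∑ᶠ i, ((fun i => if i = 0 then f i else 0) i + (fun i => if i = 0 then 0 else f i) i) := by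
    apply finsum_congr
    intro i
    by_cases h : i = 0
    · simp [h]
    · simp [h]
  rw [step1, finsum_add_distrib h1 h2]
  congr 1
  refine finsum_eq_single _ 0 ?_
  intro i hi
  simp [hi]

lemma qchoose_zero_succ : ∀ i : ℕ, qchoose 0 (i + 1) = 0 := by
  intro i
  induction i with
  | zero => simp [qchoose]
  | succ n ih => rw [qchoose, ih]; ring

lemma zchoose_zero' (k : ℤ) : zchoose k 0 = 1 := by simp [zchoose, qchoose]

lemma zchoose_zero_succ (i : ℕ) : zchoose 0 (i + 1) = 0 := by
  simp [zchoose, qchoose_zero_succ]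

end StT8
noncomputable section
namespace StT8

set_option linter.unusedSectionVars false

variable {V : Type} [AddCommGroup V] [Module ℂ V] (A : VOA V)

lemma Y_zero_apply (n : ℤ) (v : V) : A.Y 0 n v = 0 := by
  rw [map_zero]
  rfl

lemma decompose_symm_apply (d : ⨁ n : ℤ, A.wt n) :
    A.decompose.symm d = DirectSum.coeLinearMap A.wt d := by
  rfl

lemma decompose_eq_of_mem {j : ℤ} {v : V} (h : v ∈ A.wt j) :
    A.decompose v = DirectSum.of (fun i => A.wt i) j ⟨v, h⟩ := by
  apply A.decompose.symm.injective
  rw [LinearEquiv.symm_apply_apply, decompose_symm_apply, DirectSum.coeLinearMap_of]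

lemma hcomp_eq_of_mem {j : ℤ} {v : V} (h : v ∈ A.wt j) (k : ℤ) :
    A.hcomp k v = if j = k then v else 0 := by
  unfold VOA.hcomp
  rw [decompose_eq_of_mem A h, DirectSum.of_apply]
  by_cases hjk : j = k
  · subst hjk; simp
  · simp [hjk]

lemma mulAux_support (k : ℤ) (u v : V) :
    (Function.support fun i : ℕ => zchoose k i • A.Y u ((i : ℤ) - 1) v).Finite := by
  obtain ⟨N, hN⟩ := A.trunc u v
  apply support_finite_of_bound _ (N + 1).toNat
  intro i hi
  have : N ≤ (i : ℤ) - 1 := by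
    have := (Int.toNat_le (n := i)).mp hi
    omega
  rw [hN _ this, smul_zero]

lemma mulAux_zero_left (k : ℤ) (v : V) : A.mulAux k 0 v = 0 := by
  unfold VOA.mulAux
  have : ∀ i : ℕ, zchoose k i • A.Y 0 ((i : ℤ) - 1) v = 0 := by
    intro i; rw [Y_zero_apply, smul_zero]
  rw [finsum_congr this, finsum_zero]

lemma mulAux_zero_right (k : ℤ) (u : V) : A.mulAux k u 0 = 0 := by
  unfold VOA.mulAux
  have : ∀ i : ℕ, zchoose k i • A.Y u ((i : ℤ) - 1) 0 = 0 := by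
    intro i; rw [map_zero, smul_zero]
  rw [finsum_congr this, finsum_zero]

lemma mulAux_add_left (k : ℤ) (u u' v : V) :
    A.mulAux k (u + u') v = A.mulAux k u v + A.mulAux k u' v := by
  unfold VOA.mulAux
  have : ∀ i : ℕ, zchoose k i • A.Y (u + u') ((i : ℤ) - 1) v
      = zchoose k i • A.Y u ((i : ℤ) - 1) v + zchoose k i • A.Y u' ((i : ℤ) - 1) v := by
    intro i
    rw [map_add]
    simp [smul_add]
  rw [finsum_congr this, finsum_add_distrib (mulAux_support A k u v) (mulAux_support A k u' v)]

lemma mulAux_smul_left (k : ℤ) (c : ℂ) (u v : V) :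
    A.mulAux k (c • u) v = c • A.mulAux k u v := by
  unfold VOA.mulAux
  rw [smul_finsum]
  apply finsum_congr
  intro i
  rw [map_smul]
  simp [smul_comm c (zchoose k i)]

lemma mulAux_add_right (k : ℤ) (u v v' : V) :
    A.mulAux k u (v + v') = A.mulAux k u v + A.mulAux k u v' := by
  unfold VOA.mulAux
  have : ∀ i : ℕ, zchoose k i • A.Y u ((i : ℤ) - 1) (v + v')
      = zchoose k i • A.Y u ((i : ℤ) - 1) v + zchoose k i • A.Y u ((i : ℤ) - 1) v' := by
    intro i
    rw [map_add, smul_add]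
  rw [finsum_congr this, finsum_add_distrib (mulAux_support A k u v) (mulAux_support A k u v')]

lemma mulAux_smul_right (k : ℤ) (c : ℂ) (u v : V) :
    A.mulAux k u (c • v) = c • A.mulAux k u v := by
  unfold VOA.mulAux
  rw [smul_finsum]
  apply finsum_congr
  intro i
  rw [map_smul, smul_comm c (zchoose k i)]

lemma hcomp_support (u : V) :
    (Function.support fun k : ℤ => A.hcomp k u).Finite := by
  classical
  have : (Function.support fun k : ℤ => A.hcomp k u)
      ⊆ ↑(DFinsupp.support (show Π₀ n : ℤ, A.wt n from A.decompose u)) := by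
    intro k hk
    simp only [Function.mem_support] at hk
    simp only [Finset.mem_coe, DFinsupp.mem_support_iff]
    intro h0
    apply hk
    unfold VOA.hcomp
    rw [show (A.decompose u) k = 0 from h0]
    rfl
  exact Set.Finite.subset (Finset.finite_toSet _) this

lemma star_support (u v : V) :
    (Function.support fun k : ℤ => A.mulAux k (A.hcomp k u) v).Finite := by
  apply Set.Finite.subset (hcomp_support A u)
  intro k hk
  simp only [Function.mem_support] at hk ⊢
  intro h0
  exact hk (by rw [h0, mulAux_zero_left])

lemma star_eq_mulAux_of_mem {j : ℤ} {u : V} (h : u ∈ A.wt j) (v : V) :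
    A.star u v = A.mulAux j u v := by
  unfold VOA.star
  refine finsum_eq_single _ j ?_ |>.trans ?_
  · intro k hk
    rw [hcomp_eq_of_mem A h, if_neg (fun hh => hk hh.symm), mulAux_zero_left]
  · rw [hcomp_eq_of_mem A h, if_pos rfl]

lemma hcomp_add (k : ℤ) (u u' : V) :
    A.hcomp k (u + u') = A.hcomp k u + A.hcomp k u' := by
  unfold VOA.hcomp
  rw [map_add]
  rfl

lemma hcomp_smul (k : ℤ) (c : ℂ) (u : V) :
    A.hcomp k (c • u) = c • A.hcomp k u := by
  unfold VOA.hcomp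
  rw [map_smul]
  rfl

lemma hcomp_zero (k : ℤ) : A.hcomp k (0 : V) = 0 := by
  unfold VOA.hcomp
  rw [map_zero]
  rfl

lemma star_zero_left (v : V) : A.star 0 v = 0 := by
  unfold VOA.star
  have : ∀ k : ℤ, A.mulAux k (A.hcomp k (0 : V)) v = 0 := by
    intro k; rw [hcomp_zero, mulAux_zero_left]
  rw [finsum_congr this, finsum_zero]

lemma star_add_left (u u' v : V) :
    A.star (u + u') v = A.star u v + A.star u' v := by
  unfold VOA.star
  have : ∀ k : ℤ, A.mulAux k (A.hcomp k (u + u')) v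
      = A.mulAux k (A.hcomp k u) v + A.mulAux k (A.hcomp k u') v := by
    intro k; rw [hcomp_add, mulAux_add_left]
  rw [finsum_congr this, finsum_add_distrib (star_support A u v) (star_support A u' v)]

lemma star_smul_left (c : ℂ) (u v : V) :
    A.star (c • u) v = c • A.star u v := by
  unfold VOA.star
  rw [smul_finsum]
  apply finsum_congr
  intro k
  rw [hcomp_smul, mulAux_smul_left]

end StT8
noncomputable section
namespace StT8

set_option linter.unusedSectionVars false
set_option maxHeartbeats 1000000

open Finset

variable {ℓ : ℕ} {V : Type} [AddCommGroup V] [Module ℂ V]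

/-- The action function used throughout. -/
def hf (A : VOA V) (hgen : Fin ℓ → V) : Fin ℓ → ℤ → V → V :=
  fun a k w => A.Y (hgen a) k w

/-- The word vector `h_{a1}(-n1) ⋯ h_{ak}(-nk) 𝟏`. -/
def wrd (A : VOA V) (hgen : Fin ℓ → V) (L : List (Fin ℓ × ℕ+)) : V :=
  wordAct (hf A hgen) L A.one

/-- Total weight of a word. -/
def wtL (L : List (Fin ℓ × ℕ+)) : ℕ := (L.map fun p => ((p.2 : ℕ))).sum

/-- Parity Finset of a word. -/
def par (L : List (Fin ℓ × ℕ+)) : Finset (Fin ℓ) :=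
  Finset.univ.filter fun c => ¬ Even ((L.map Prod.fst).count c)

lemma pnat_one_le (j : ℕ+) : 1 ≤ ((j : ℕ) : ℤ) := by exact_mod_cast j.property

lemma wrd_nil (A : VOA V) (hgen : Fin ℓ → V) : wrd A hgen [] = A.one := rfl

lemma wrd_cons (A : VOA V) (hgen : Fin ℓ → V) (c : Fin ℓ) (k : ℕ+) (L : List (Fin ℓ × ℕ+)) :
    wrd A hgen ((c, k) :: L) = A.Y (hgen c) (-((k : ℕ) : ℤ)) (wrd A hgen L) := rfl

lemma wtL_nil : wtL (ℓ := ℓ) [] = 0 := rfl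

lemma wtL_cons (c : Fin ℓ) (k : ℕ+) (L : List (Fin ℓ × ℕ+)) :
    wtL ((c, k) :: L) = (k : ℕ) + wtL L := rfl

lemma par_nil : par (ℓ := ℓ) [] = ∅ := by
  simp [par]

lemma par_cons (c : Fin ℓ) (k : ℕ+) (L : List (Fin ℓ × ℕ+)) :
    par ((c, k) :: L) = symmDiff (par L) {c} := by
  ext c'
  simp only [par, Finset.mem_filter, Finset.mem_univ, true_and, Finset.mem_symmDiff,
    Finset.mem_singleton, List.map_cons, List.count_cons]
  by_cases hc : c' = c
  · subst hc
    simp [Nat.even_add_one]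
  · have : (c == c') = false := by
      simp [Ne.symm hc]
    simp [this, hc]

lemma mem_par_iff (L : List (Fin ℓ × ℕ+)) (c : Fin ℓ) :
    c ∈ par L ↔ ¬ Even ((L.map Prod.fst).count c) := by
  simp [par]

lemma par_eq_iff (L : List (Fin ℓ × ℕ+)) (α : Finset (Fin ℓ)) :
    par L = α ↔ ∀ c : Fin ℓ, c ∈ α ↔ ¬ Even ((L.map Prod.fst).count c) := by
  rw [Finset.ext_iff]
  constructor
  · intro h c; rw [← h c, mem_par_iff]
  · intro h c; rw [mem_par_iff, h c]

section Heis

variable (A : VOA V) (hgen : Fin ℓ → V)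

/-- Commutator formula. -/
lemma Ycomm (hH : IsHeisenberg A hgen) (c d : Fin ℓ) (m n : ℤ) (x : V) :
    A.Y (hgen c) m (A.Y (hgen d) n x)
      = A.Y (hgen d) n (A.Y (hgen c) m x)
        + (if c = d ∧ m + n = 0 then (m : ℂ) else 0) • x := by
  have h := hH.heis_comm c d m n
  have h2 := congrArg (fun (f : Module.End ℂ V) => f x) h
  simp only [LinearMap.sub_apply, Module.End.mul_apply, LinearMap.smul_apply,
    Module.End.one_apply] at h2
  have := sub_eq_iff_eq_add.mp h2
  rw [this]
  abel

/-- Negative modes commute. -/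
lemma Ycomm_neg (hH : IsHeisenberg A hgen) (c d : Fin ℓ) (m n : ℤ) (hmn : m + n ≠ 0) (x : V) :
    A.Y (hgen c) m (A.Y (hgen d) n x) = A.Y (hgen d) n (A.Y (hgen c) m x) := by
  rw [Ycomm A hgen hH]
  rw [if_neg (fun hx => hmn hx.2), zero_smul, add_zero]

lemma wordAct_push (hH : IsHeisenberg A hgen) (L : List (Fin ℓ × ℕ+)) (c : Fin ℓ) (m : ℤ) (hm : m < 0) (x : V) :
    wordAct (hf A hgen) L (A.Y (hgen c) m x) = A.Y (hgen c) m (wordAct (hf A hgen) L x) := by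
  induction L with
  | nil => rfl
  | cons hd L' IH =>
    obtain ⟨d, j⟩ := hd
    show hf A hgen d (-((j:ℕ):ℤ)) (wordAct (hf A hgen) L' (A.Y (hgen c) m x)) = _
    rw [IH]
    show A.Y (hgen d) (-((j:ℕ):ℤ)) (A.Y (hgen c) m (wordAct (hf A hgen) L' x))
      = A.Y (hgen c) m (A.Y (hgen d) (-((j:ℕ):ℤ)) (wordAct (hf A hgen) L' x))
    exact Ycomm_neg A hgen hH d c (-((j:ℕ):ℤ)) m
      (by have := pnat_one_le j; omega) (wordAct (hf A hgen) L' x)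

lemma word_wt (hH : IsHeisenberg A hgen) : ∀ L : List (Fin ℓ × ℕ+), wrd A hgen L ∈ A.wt (wtL L) := by
  intro L
  induction L with
  | nil => exact A.one_wt
  | cons hd L' IH =>
    obtain ⟨c, k⟩ := hd
    rw [wrd_cons, wtL_cons]
    have h := A.mode_wt 1 (hgen c) (hH.wt_one c) (wtL L') (-((k:ℕ):ℤ)) _ IH
    have harith : ((wtL L' : ℤ) + 1 - (-((k:ℕ):ℤ)) - 1) = (((k:ℕ) + wtL L' : ℕ) : ℤ) := by
      push_cast; ring
    rwa [harith] at h

/-- The bounded word span. -/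
def Nsp (A : VOA V) (hgen : Fin ℓ → V) (β : Finset (Fin ℓ)) (w l : ℤ) : Submodule ℂ V :=
  Submodule.span ℂ {v | ∃ L : List (Fin ℓ × ℕ+),
    par L = β ∧ (wtL L : ℤ) ≤ w ∧ (L.length : ℤ) ≤ l ∧ v = wrd A hgen L}

lemma word_mem_Nsp {L : List (Fin ℓ × ℕ+)} {β w l} (hβ : par L = β)
    (hw : (wtL L : ℤ) ≤ w) (hl : (L.length : ℤ) ≤ l) :
    wrd A hgen L ∈ Nsp A hgen β w l :=
  Submodule.subset_span ⟨L, hβ, hw, hl, rfl⟩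

lemma Nsp_le_of {β β' : Finset (Fin ℓ)} {w w' l l' : ℤ} (hβ : β = β') (hw : w ≤ w')
    (hl : l ≤ l') : Nsp A hgen β w l ≤ Nsp A hgen β' w' l' := by
  subst hβ
  apply Submodule.span_mono
  rintro v ⟨L, h1, h2, h3, h4⟩
  exact ⟨L, h1, le_trans h2 hw, le_trans h3 hl, h4⟩

lemma Nsp_le_wordSpanV (β : Finset (Fin ℓ)) (w l : ℤ) :
    Nsp A hgen β w l ≤ wordSpanV A hgen β := by
  apply Submodule.span_le.mpr
  rintro v ⟨L, h1, _, _, h4⟩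
  apply Submodule.subset_span
  exact ⟨L, (par_eq_iff L β).mp h1, h4⟩

/-- Creation mode action on the word span. -/
lemma hNeg (c : Fin ℓ) (m : ℤ) (hm : m ≤ -1) {β : Finset (Fin ℓ)} {w l : ℤ} {v : V}
    (hv : v ∈ Nsp A hgen β w l) :
    A.Y (hgen c) m v ∈ Nsp A hgen (symmDiff β {c}) (w - m) (l + 1) := by
  induction hv using Submodule.span_induction with
  | mem x hx =>
    obtain ⟨L, h1, h2, h3, h4⟩ := hx
    subst h4
    obtain ⟨k0, hk0⟩ : ∃ k0 : ℕ, (k0 : ℤ) = -m := ⟨(-m).toNat, by omega⟩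
    have hk0pos : 0 < k0 := by omega
    have : A.Y (hgen c) m (wrd A hgen L) = wrd A hgen ((c, Nat.toPNat k0 hk0pos) :: L) := by
      rw [wrd_cons]
      exact congrArg (fun t : ℤ => A.Y (hgen c) t (wrd A hgen L))
        (show m = -((((⟨k0, hk0pos⟩ : ℕ+)) : ℕ) : ℤ) from by show m = -((k0:ℕ):ℤ); omega)
    rw [this]
    apply word_mem_Nsp A hgen
    · rw [par_cons, h1]
    · show ((wtL ((c, Nat.toPNat k0 hk0pos) :: L) : ℕ) : ℤ) ≤ w - m
      rw [wtL_cons]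
      show ((k0 + wtL L : ℕ) : ℤ) ≤ w - m
      push_cast
      omega
    · simp only [List.length_cons]
      push_cast
      omega
  | zero => rw [map_zero]; exact Submodule.zero_mem _
  | add x y _ _ hx hy => rw [map_add]; exact Submodule.add_mem _ hx hy
  | smul c' x _ hx => rw [map_smul]; exact Submodule.smul_mem _ _ hx

/-- Annihilation mode action on single words. -/
lemma hNonneg_word (hH : IsHeisenberg A hgen) (c : Fin ℓ) (m : ℤ) (hm : 0 ≤ m) :
    ∀ L : List (Fin ℓ × ℕ+),
      A.Y (hgen c) m (wrd A hgen L)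
        ∈ Nsp A hgen (symmDiff (par L) {c}) ((wtL L : ℤ) - m) ((L.length : ℤ) - 1) := by
  intro L
  induction L with
  | nil =>
    rw [wrd_nil, A.create_ge _ _ hm]
    exact Submodule.zero_mem _
  | cons hd L' IH =>
    obtain ⟨d, j⟩ := hd
    rw [wrd_cons, Ycomm A hgen hH c d m (-((j:ℕ):ℤ))]
    apply Submodule.add_mem
    · -- main term
      have h1 := hNeg A hgen d (-((j:ℕ):ℤ)) (by have := pnat_one_le j; omega) IH
      refine Nsp_le_of A hgen ?_ ?_ ?_ h1
      · rw [par_cons]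
        rw [symmDiff_right_comm]
      · rw [wtL_cons]; push_cast; omega
      · simp only [List.length_cons]; push_cast; omega
    · -- delta term
      by_cases hcd : c = d ∧ m + (-((j:ℕ):ℤ)) = 0
      · rw [if_pos hcd]
        apply Submodule.smul_mem
        apply word_mem_Nsp A hgen
        · rw [par_cons, hcd.1, symmDiff_assoc, symmDiff_self, symmDiff_bot]
        · rw [wtL_cons]; push_cast; omega
        · simp only [List.length_cons]; push_cast; omega
      · rw [if_neg hcd, zero_smul]
        exact Submodule.zero_mem _

lemma hNonneg (hH : IsHeisenberg A hgen) (c : Fin ℓ) (m : ℤ) (hm : 0 ≤ m) {β : Finset (Fin ℓ)} {w l : ℤ} {v : V}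
    (hv : v ∈ Nsp A hgen β w l) :
    A.Y (hgen c) m v ∈ Nsp A hgen (symmDiff β {c}) (w - m) (l - 1) := by
  induction hv using Submodule.span_induction with
  | mem x hx =>
    obtain ⟨L, h1, h2, h3, h4⟩ := hx
    subst h4
    have hw := hNonneg_word A hgen hH c m hm L
    exact Nsp_le_of A hgen (by rw [h1]) (by omega) (by omega) hw
  | zero => rw [map_zero]; exact Submodule.zero_mem _
  | add x y _ _ hx hy => rw [map_add]; exact Submodule.add_mem _ hx hy
  | smul c' x _ hx => rw [map_smul]; exact Submodule.smul_mem _ _ hx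

end Heis

end StT8
noncomputable section
namespace StT8

set_option linter.unusedSectionVars false
set_option maxHeartbeats 1000000

open Finset

variable {ℓ : ℕ} {V : Type} [AddCommGroup V] [Module ℂ V]

lemma Y_one_apply (A : VOA V) (t : ℤ) (v : V) :
    A.Y A.one t v = if t = -1 then v else 0 := by
  rw [A.vacuum_act]
  by_cases h : t = -1
  · rw [if_pos h, if_pos h]; rfl
  · rw [if_neg h, if_neg h]; rfl

/-- The iterate (associativity) formula, specialization of Borcherds. -/
lemma iterateE (A : VOA V) (u v w : V) (p t : ℤ) :
    A.Y (A.Y u p v) t w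
      = ∑ᶠ i : ℕ, ((-1 : ℂ) ^ i * zchoose p i) •
          (A.Y u (p - i) (A.Y v (t + i) w)
            - ((-1 : ℂ) ^ p) • A.Y v (t + p - i) (A.Y u i w)) := by
  have hB := A.borcherds u v w p 0 t
  have hL : ∑ᶠ i : ℕ, zchoose 0 i • A.Y (A.Y u (p + i) v) (0 + t - i) w
      = A.Y (A.Y u p v) t w := by
    rw [finsum_eq_single _ 0]
    · norm_num [zchoose_zero']
    · intro i hi
      obtain ⟨j, rfl⟩ := Nat.exists_eq_succ_of_ne_zero hi
      rw [zchoose_zero_succ, zero_smul]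
  rw [hL] at hB
  rw [hB]
  apply finsum_congr
  intro i
  simp only [zero_add]

lemma iter_support (A : VOA V) (u v w : V) (p t : ℤ) :
    (Function.support fun i : ℕ => ((-1 : ℂ) ^ i * zchoose p i) •
        (A.Y u (p - i) (A.Y v (t + i) w)
          - ((-1 : ℂ) ^ p) • A.Y v (t + p - i) (A.Y u i w))).Finite := by
  obtain ⟨N1, hN1⟩ := A.trunc v w
  obtain ⟨N2, hN2⟩ := A.trunc u w
  apply support_finite_of_bound _ (max (N1 - t) N2).toNat
  intro i hi
  have hi' : (max (N1 - t) N2 : ℤ) ≤ i := Int.toNat_le.mp hi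
  have h1 : A.Y v (t + i) w = 0 := hN1 _ (by have := le_max_left (N1 - t) N2; omega)
  have h2 : A.Y u (i : ℤ) w = 0 := hN2 _ (by have := le_max_right (N1 - t) N2; omega)
  rw [h1, h2, map_zero, map_zero, smul_zero, sub_zero, smul_zero]

section Heis2

variable (A : VOA V) (hgen : Fin ℓ → V)

lemma memMode (hH : IsHeisenberg A hgen) :
    ∀ (P : List (Fin ℓ × ℕ+)) (t : ℤ) (β : Finset (Fin ℓ)) (w l : ℤ) (v : V),
      v ∈ Nsp A hgen β w l →
      A.Y (wrd A hgen P) t v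
        ∈ Nsp A hgen (symmDiff (par P) β) (w + wtL P - 1 - t) ((l : ℤ) + P.length) := by
  intro P
  induction P with
  | nil =>
    intro t β w l v hv
    rw [wrd_nil, Y_one_apply]
    by_cases h : t = -1
    · rw [if_pos h]
      subst h
      refine Nsp_le_of A hgen ?_ ?_ ?_ hv
      · rw [par_nil, ← Finset.bot_eq_empty, bot_symmDiff]
      · simp [wtL_nil]
      · simp
    · rw [if_neg h]
      exact Submodule.zero_mem _
  | cons hd P' IH =>
    obtain ⟨c, k⟩ := hd
    intro t β w l v hv
    have hk1 := pnat_one_le k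
    rw [wrd_cons, iterateE]
    apply finsum_mem_submodule
    intro i
    apply Submodule.smul_mem
    apply Submodule.sub_mem
    · have h1 := IH (t + i) β w l v hv
      have h2 := hNeg A hgen c (-((k : ℕ) : ℤ) - i) (by omega) h1
      refine Nsp_le_of A hgen ?_ ?_ ?_ h2
      · rw [par_cons, symmDiff_right_comm]
      · simp only [wtL_cons]; push_cast; omega
      · simp only [List.length_cons]; push_cast; omega
    · apply Submodule.smul_mem
      have h1 := hNonneg A hgen hH c (i : ℤ) (Int.natCast_nonneg i) hv
      have h2 := IH (t + -((k : ℕ) : ℤ) - i) (symmDiff β {c}) (w - i) (l - 1) _ h1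
      refine Nsp_le_of A hgen ?_ ?_ ?_ h2
      · rw [par_cons, symmDiff_comm β {c}, ← symmDiff_assoc]
      · simp only [wtL_cons]; push_cast; omega
      · simp only [List.length_cons]; push_cast; omega

lemma memMode2 (hH : IsHeisenberg A hgen) :
    ∀ (P : List (Fin ℓ × ℕ+)) (t : ℤ), 0 ≤ t →
      ∀ (β : Finset (Fin ℓ)) (w l : ℤ) (v : V),
      v ∈ Nsp A hgen β w l →
      A.Y (wrd A hgen P) t v
        ∈ Nsp A hgen (symmDiff (par P) β) (w + wtL P - 1 - t) ((l : ℤ) + P.length - 1) := by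
  intro P
  induction P with
  | nil =>
    intro t ht β w l v hv
    rw [wrd_nil, Y_one_apply, if_neg (by omega)]
    exact Submodule.zero_mem _
  | cons hd P' IH =>
    obtain ⟨c, k⟩ := hd
    intro t ht β w l v hv
    have hk1 := pnat_one_le k
    rw [wrd_cons, iterateE]
    apply finsum_mem_submodule
    intro i
    apply Submodule.smul_mem
    apply Submodule.sub_mem
    · have h1 := IH (t + i) (by positivity) β w l v hv
      have h2 := hNeg A hgen c (-((k : ℕ) : ℤ) - i) (by omega) h1
      refine Nsp_le_of A hgen ?_ ?_ ?_ h2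
      · rw [par_cons, symmDiff_right_comm]
      · simp only [wtL_cons]; push_cast; omega
      · simp only [List.length_cons]; push_cast; omega
    · apply Submodule.smul_mem
      have h1 := hNonneg A hgen hH c (i : ℤ) (Int.natCast_nonneg i) hv
      have h2 := memMode A hgen hH P' (t + -((k : ℕ) : ℤ) - i) (symmDiff β {c}) (w - i) (l - 1) _ h1
      refine Nsp_le_of A hgen ?_ ?_ ?_ h2
      · rw [par_cons, symmDiff_comm β {c}, ← symmDiff_assoc]
      · simp only [wtL_cons]; push_cast; omega
      · simp only [List.length_cons]; push_cast; omega

lemma refMode (hH : IsHeisenberg A hgen) :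
    ∀ (P : List (Fin ℓ × ℕ+)) (β : Finset (Fin ℓ)) (w l : ℤ) (v : V),
      v ∈ Nsp A hgen β w l →
      A.Y (wrd A hgen P) (-1) v - wordAct (hf A hgen) P v
        ∈ Nsp A hgen (symmDiff (par P) β) (w + wtL P - 1) ((l : ℤ) + P.length)
          ⊔ Nsp A hgen (symmDiff (par P) β) (w + wtL P) ((l : ℤ) + P.length - 1) := by
  intro P
  induction P with
  | nil =>
    intro β w l v hv
    rw [wrd_nil, Y_one_apply, if_pos rfl]
    show v - v ∈ _
    rw [sub_self]
    exact Submodule.zero_mem _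
  | cons hd P' IH =>
    obtain ⟨c, k⟩ := hd
    intro β w l v hv
    have hk1 := pnat_one_le k
    set p : ℤ := -((k : ℕ) : ℤ) with hp
    set e : ℂ := ((-1 : ℂ) ^ p) with he
    set F : ℕ → V := fun i => ((-1 : ℂ) ^ i * zchoose p i) •
        (A.Y (hgen c) (p - i) (A.Y (wrd A hgen P') (-1 + i) v)
          - e • A.Y (wrd A hgen P') (-1 + p - i) (A.Y (hgen c) i v)) with hF
    have hY : A.Y (wrd A hgen ((c, k) :: P')) (-1) v = ∑ᶠ i, F i := by
      rw [wrd_cons]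
      exact iterateE A (hgen c) (wrd A hgen P') v p (-1)
    have hsupp : (Function.support F).Finite := iter_support A (hgen c) (wrd A hgen P') v p (-1)
    have hF0 : F 0 = A.Y (hgen c) p (A.Y (wrd A hgen P') (-1) v)
        - e • A.Y (wrd A hgen P') (-1 + p) (A.Y (hgen c) 0 v) := by
      rw [hF]
      norm_num [zchoose_zero']
    set r : V := A.Y (wrd A hgen P') (-1) v - wordAct (hf A hgen) P' v with hr
    have hword : wordAct (hf A hgen) ((c, k) :: P') v
        = A.Y (hgen c) p (wordAct (hf A hgen) P' v) := rfl
    have hkey : A.Y (wrd A hgen ((c, k) :: P')) (-1) v - wordAct (hf A hgen) ((c, k) :: P') v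
        = (A.Y (hgen c) p r
            - e • A.Y (wrd A hgen P') (-1 + p) (A.Y (hgen c) 0 v))
          + ∑ᶠ i, (if i = 0 then 0 else F i) := by
      rw [hY, finsum_split_zero F hsupp, hF0, hword, hr, map_sub]
      abel
    rw [hkey]
    set T := Nsp A hgen (symmDiff (par ((c, k) :: P')) β) (w + wtL ((c, k) :: P') - 1)
          ((l : ℤ) + (List.length ((c, k) :: P')))
        ⊔ Nsp A hgen (symmDiff (par ((c, k) :: P')) β) (w + wtL ((c, k) :: P'))
          ((l : ℤ) + (List.length ((c, k) :: P')) - 1) with hT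
    apply Submodule.add_mem
    · apply Submodule.sub_mem
      · -- h_c(-k) applied to the recursive remainder
        have hrmem := IH β w l v hv
        obtain ⟨r1, hr1, r2, hr2, hr12⟩ := Submodule.mem_sup.mp hrmem
        rw [hr, ← hr12, map_add]
        apply Submodule.add_mem
        · apply Submodule.mem_sup_left
          have h2 := hNeg A hgen c p (by omega) hr1
          refine Nsp_le_of A hgen ?_ ?_ ?_ h2
          · rw [par_cons, symmDiff_right_comm]
          · simp only [wtL_cons]; push_cast; omega
          · simp only [List.length_cons]; push_cast; omega
        · apply Submodule.mem_sup_right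
          have h2 := hNeg A hgen c p (by omega) hr2
          refine Nsp_le_of A hgen ?_ ?_ ?_ h2
          · rw [par_cons, symmDiff_right_comm]
          · simp only [wtL_cons]; push_cast; omega
          · simp only [List.length_cons]; push_cast; omega
      · -- the `h_c(0)` term
        apply Submodule.mem_sup_right
        apply Submodule.smul_mem
        have h1 := hNonneg A hgen hH c 0 le_rfl hv
        have h2 := memMode A hgen hH P' (-1 + p) (symmDiff β {c}) (w - 0) (l - 1) _ h1
        refine Nsp_le_of A hgen ?_ ?_ ?_ h2
        · rw [par_cons, symmDiff_comm β {c}, ← symmDiff_assoc]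
        · simp only [wtL_cons]; push_cast; omega
        · simp only [List.length_cons]; push_cast; omega
    · -- the tail
      apply finsum_mem_submodule
      intro i
      by_cases hi : i = 0
      · rw [if_pos hi]
        exact Submodule.zero_mem _
      · rw [if_neg hi]
        have hi1 : 1 ≤ (i : ℤ) := by
          have : 1 ≤ i := Nat.one_le_iff_ne_zero.mpr hi
          exact_mod_cast this
        apply Submodule.mem_sup_right
        rw [hF]
        apply Submodule.smul_mem
        apply Submodule.sub_mem
        · have h1 := memMode2 A hgen hH P' (-1 + i) (by omega) β w l v hv
          have h2 := hNeg A hgen c (p - i) (by omega) h1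
          refine Nsp_le_of A hgen ?_ ?_ ?_ h2
          · rw [par_cons, symmDiff_right_comm]
          · simp only [wtL_cons]; push_cast; omega
          · simp only [List.length_cons]; push_cast; omega
        · apply Submodule.smul_mem
          have h1 := hNonneg A hgen hH c (i : ℤ) (Int.natCast_nonneg i) hv
          have h2 := memMode A hgen hH P' (-1 + p - i) (symmDiff β {c}) (w - i) (l - 1) _ h1
          refine Nsp_le_of A hgen ?_ ?_ ?_ h2
          · rw [par_cons, symmDiff_comm β {c}, ← symmDiff_assoc]
          · simp only [wtL_cons]; push_cast; omega
          · simp only [List.length_cons]; push_cast; omega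

end Heis2

end StT8
noncomputable section
namespace StT8

set_option linter.unusedSectionVars false
set_option maxHeartbeats 1000000

open Finset

variable {ℓ : ℕ} {V : Type} [AddCommGroup V] [Module ℂ V]

lemma empty_symmDiff (β : Finset (Fin ℓ)) : symmDiff (∅ : Finset (Fin ℓ)) β = β := by
  rw [← Finset.bot_eq_empty, bot_symmDiff]

lemma symmDiff_empty' (β : Finset (Fin ℓ)) : symmDiff β (∅ : Finset (Fin ℓ)) = β := by
  rw [← Finset.bot_eq_empty, symmDiff_bot]

lemma pair_symmDiff_left {a b : Fin ℓ} (hab : a ≠ b) :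
    symmDiff ({a, b} : Finset (Fin ℓ)) {a} = {b} := by
  ext c
  simp only [Finset.mem_symmDiff, Finset.mem_insert, Finset.mem_singleton]
  constructor
  · rintro (⟨h1 | h1, h2⟩ | ⟨h1, h2⟩)
    · exact absurd h1 h2
    · exact h1
    · exact absurd (Or.inl h1) h2
  · intro h
    subst h
    exact Or.inl ⟨Or.inr rfl, fun h => hab h.symm⟩

lemma singleton_symmDiff_self (b : Fin ℓ) :
    symmDiff ({b} : Finset (Fin ℓ)) {b} = ∅ := by
  rw [symmDiff_self, Finset.bot_eq_empty]

section Heis3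

variable (A : VOA V) (hgen : Fin ℓ → V)

lemma SV_eq_wrd (a b : Fin ℓ) (m n : ℕ+) :
    SV A hgen a b ((m : ℕ) : ℤ) ((n : ℕ) : ℤ) = wrd A hgen [(a, m), (b, n)] := rfl

lemma par_pair {a b : Fin ℓ} (hab : a ≠ b) (m n : ℕ+) :
    par [(a, m), (b, n)] = {a, b} := by
  rw [par_cons, par_cons, par_nil, empty_symmDiff]
  ext c
  simp only [Finset.mem_symmDiff, Finset.mem_insert, Finset.mem_singleton]
  constructor
  · rintro (⟨h1, h2⟩ | ⟨h1, h2⟩)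
    · exact Or.inr h1
    · exact Or.inl h1
  · rintro (h | h)
    · subst h
      exact Or.inr ⟨rfl, fun hc => hab hc⟩
    · subst h
      exact Or.inl ⟨rfl, fun hc => hab hc.symm⟩

lemma wtL_pair (a b : Fin ℓ) (m n : ℕ+) :
    wtL [(a, m), (b, n)] = (m : ℕ) + (n : ℕ) := by
  simp [wtL_cons, wtL_nil]

lemma extract (hH : IsHeisenberg A hgen) :
    ∀ (L : List (Fin ℓ × ℕ+)) (c : Fin ℓ), c ∈ par L →
      ∃ (k : ℕ+) (L' : List (Fin ℓ × ℕ+)),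
        wrd A hgen L = A.Y (hgen c) (-((k : ℕ) : ℤ)) (wrd A hgen L')
          ∧ par L' = symmDiff (par L) {c}
          ∧ wtL L = (k : ℕ) + wtL L'
          ∧ L.length = L'.length + 1 := by
  intro L
  induction L with
  | nil =>
    intro c hc
    rw [par_nil] at hc
    exact absurd hc (Finset.notMem_empty c)
  | cons hd L'' IH =>
    obtain ⟨d, j⟩ := hd
    intro c hc
    by_cases hcd : c = d
    · subst hcd
      refine ⟨j, L'', rfl, ?_, rfl, rfl⟩
      rw [par_cons, symmDiff_assoc, symmDiff_self, symmDiff_bot]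
    · have hc'' : c ∈ par L'' := by
        rw [par_cons, Finset.mem_symmDiff] at hc
        rcases hc with ⟨h1, _⟩ | ⟨h1, _⟩
        · exact h1
        · exact absurd (Finset.mem_singleton.mp h1) hcd
      obtain ⟨k, L1, he, hpar, hwt, hlen⟩ := IH c hc''
      refine ⟨k, (d, j) :: L1, ?_, ?_, ?_, ?_⟩
      · rw [wrd_cons, he, wrd_cons]
        exact Ycomm_neg A hgen hH d c _ _
          (by have := pnat_one_le j; have := pnat_one_le k; omega) _
      · rw [par_cons, par_cons, hpar, symmDiff_right_comm]
      · rw [wtL_cons, wtL_cons, hwt]; omega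
      · simp [hlen]

/-- The main induction: reduce `α`-words to the elements provided by `hkey`. -/
lemma mainInd (a b : Fin ℓ) (hab : a ≠ b) (T : Submodule ℂ V)
    (hkey : ∀ L : List (Fin ℓ × ℕ+), par L = {a, b} →
      ∃ X ∈ T, X - wrd A hgen L
        ∈ Nsp A hgen {a, b} ((wtL L : ℤ) - 1) (L.length)
          ⊔ Nsp A hgen {a, b} (wtL L) ((L.length : ℤ) - 1)) :
    ∀ L : List (Fin ℓ × ℕ+), par L = {a, b} → wrd A hgen L ∈ T := by
  suffices H : ∀ w l : ℕ, ∀ L, par L = {a, b} → wtL L ≤ w → L.length ≤ l →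
      wrd A hgen L ∈ T by
    intro L h
    exact H (wtL L) L.length L h le_rfl le_rfl
  intro w
  induction w using Nat.strong_induction_on with
  | _ w IHw =>
  intro l
  induction l using Nat.strong_induction_on with
  | _ l IHl =>
  intro L hpar hw hl
  have hLne : L ≠ [] := by
    intro h
    subst h
    rw [par_nil] at hpar
    have : a ∈ (∅ : Finset (Fin ℓ)) := hpar ▸ Finset.mem_insert_self a {b}
    exact absurd this (Finset.notMem_empty a)
  have hwt1 : (1 : ℤ) ≤ (wtL L : ℤ) := by
    cases L with
    | nil => exact absurd rfl hLne
    | cons hd tl =>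
      obtain ⟨c, k⟩ := hd
      rw [wtL_cons]
      have := pnat_one_le k
      push_cast
      omega
  have hlen1 : 1 ≤ L.length := by
    cases L with
    | nil => exact absurd rfl hLne
    | cons hd tl => simp
  obtain ⟨X, hX, hdiff⟩ := hkey L hpar
  have hsub : Nsp A hgen {a, b} ((wtL L : ℤ) - 1) (L.length)
      ⊔ Nsp A hgen {a, b} (wtL L) ((L.length : ℤ) - 1) ≤ T := by
    apply sup_le
    · apply Submodule.span_le.mpr
      rintro x ⟨L', h1, h2, h3, h4⟩
      subst h4
      exact IHw (w - 1) (by omega) L'.length L' h1 (by omega) le_rfl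
    · apply Submodule.span_le.mpr
      rintro x ⟨L', h1, h2, h3, h4⟩
      subst h4
      exact IHl (l - 1) (by omega) L' h1 (by omega) (by omega)
  have : wrd A hgen L = X - (X - wrd A hgen L) := by abel
  rw [this]
  exact Submodule.sub_mem _ hX (hsub hdiff)

end Heis3

end StT8
noncomputable section
namespace StT8

set_option linter.unusedSectionVars false
set_option maxHeartbeats 1000000

open Finset

variable {ℓ : ℕ} {V : Type} [AddCommGroup V] [Module ℂ V]

section Heis4

variable (A : VOA V) (hgen : Fin ℓ → V)

lemma hkeyRight (hH : IsHeisenberg A hgen) {a b : Fin ℓ} (hab : a ≠ b)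
    (L : List (Fin ℓ × ℕ+)) (hpar : par L = {a, b}) :
    ∃ (m n : ℕ+) (L₀ : List (Fin ℓ × ℕ+)), par L₀ = ∅ ∧
      A.star (wrd A hgen [(a, m), (b, n)]) (wrd A hgen L₀) - wrd A hgen L
        ∈ Nsp A hgen {a, b} ((wtL L : ℤ) - 1) (L.length)
          ⊔ Nsp A hgen {a, b} (wtL L) ((L.length : ℤ) - 1) := by
  have ha : a ∈ par L := by rw [hpar]; exact Finset.mem_insert_self a {b}
  obtain ⟨m, L1, he1, hp1, hw1, hl1⟩ := extract A hgen hH L a ha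
  have hp1' : par L1 = {b} := by rw [hp1, hpar, pair_symmDiff_left hab]
  have hb1 : b ∈ par L1 := by rw [hp1']; exact Finset.mem_singleton_self b
  obtain ⟨n, L₀, he0, hp0, hw0, hl0⟩ := extract A hgen hH L1 b hb1
  have hpar0 : par L₀ = ∅ := by rw [hp0, hp1', singleton_symmDiff_self]
  refine ⟨m, n, L₀, hpar0, ?_⟩
  have hwp : wtL [(a, m), (b, n)] = (m : ℕ) + (n : ℕ) := wtL_pair a b m n
  have hlp : ([(a, m), (b, n)] : List (Fin ℓ × ℕ+)).length = 2 := rfl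
  have hwrdL : wrd A hgen L = wordAct (hf A hgen) [(a, m), (b, n)] (wrd A hgen L₀) := by
    show wrd A hgen L
      = A.Y (hgen a) (-((m : ℕ) : ℤ)) (A.Y (hgen b) (-((n : ℕ) : ℤ)) (wrd A hgen L₀))
    rw [he1, he0]
  have hv0 : wrd A hgen L₀ ∈ Nsp A hgen ∅ ((wtL L₀ : ℤ)) ((L₀.length : ℤ)) :=
    word_mem_Nsp A hgen hpar0 le_rfl le_rfl
  set P : List (Fin ℓ × ℕ+) := [(a, m), (b, n)] with hP
  set jw : ℤ := ((wtL P : ℕ) : ℤ) with hjw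
  set F : ℕ → V := fun i => zchoose jw i • A.Y (wrd A hgen P) ((i : ℤ) - 1) (wrd A hgen L₀)
    with hF
  have hstar : A.star (wrd A hgen P) (wrd A hgen L₀) = ∑ᶠ i, F i := by
    rw [star_eq_mulAux_of_mem A (word_wt A hgen hH P) (wrd A hgen L₀)]
    rfl
  have hsupp : (Function.support F).Finite := mulAux_support A jw _ _
  have hF0 : F 0 = A.Y (wrd A hgen P) (-1) (wrd A hgen L₀) := by
    rw [hF]
    norm_num [zchoose_zero']
  have hre : A.star (wrd A hgen P) (wrd A hgen L₀) - wrd A hgen L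
      = (A.Y (wrd A hgen P) (-1) (wrd A hgen L₀) - wordAct (hf A hgen) P (wrd A hgen L₀))
        + ∑ᶠ i, (if i = 0 then 0 else F i) := by
    rw [hstar, finsum_split_zero F hsupp, hF0, hwrdL]
    abel
  rw [hre]
  apply Submodule.add_mem
  · have h1 := refMode A hgen hH P ∅ ((wtL L₀ : ℕ) : ℤ) ((L₀.length : ℕ) : ℤ) _ hv0
    refine sup_le_sup (Nsp_le_of A hgen ?_ ?_ ?_) (Nsp_le_of A hgen ?_ ?_ ?_) h1
    · rw [symmDiff_empty', hP, par_pair hab]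
    · push_cast; omega
    · push_cast [hlp]; omega
    · rw [symmDiff_empty', hP, par_pair hab]
    · push_cast; omega
    · push_cast [hlp]; omega
  · apply Submodule.mem_sup_left
    apply finsum_mem_submodule
    intro i
    by_cases hi : i = 0
    · rw [if_pos hi]; exact Submodule.zero_mem _
    · rw [if_neg hi, hF]
      apply Submodule.smul_mem
      have hi1 : 1 ≤ (i : ℤ) := by exact_mod_cast Nat.one_le_iff_ne_zero.mpr hi
      have h1 := memMode A hgen hH P ((i : ℤ) - 1) ∅ ((wtL L₀ : ℕ) : ℤ)
        ((L₀.length : ℕ) : ℤ) _ hv0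
      refine Nsp_le_of A hgen ?_ ?_ ?_ h1
      · rw [symmDiff_empty', hP, par_pair hab]
      · push_cast; omega
      · push_cast [hlp]; omega

lemma hkeyLeft (hH : IsHeisenberg A hgen) {a b : Fin ℓ} (hab : a ≠ b)
    (L : List (Fin ℓ × ℕ+)) (hpar : par L = {a, b}) :
    ∃ (m n : ℕ+) (L₀ : List (Fin ℓ × ℕ+)), par L₀ = ∅ ∧
      A.star (wrd A hgen L₀) (wrd A hgen [(a, m), (b, n)]) - wrd A hgen L
        ∈ Nsp A hgen {a, b} ((wtL L : ℤ) - 1) (L.length)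
          ⊔ Nsp A hgen {a, b} (wtL L) ((L.length : ℤ) - 1) := by
  have ha : a ∈ par L := by rw [hpar]; exact Finset.mem_insert_self a {b}
  obtain ⟨m, L1, he1, hp1, hw1, hl1⟩ := extract A hgen hH L a ha
  have hp1' : par L1 = {b} := by rw [hp1, hpar, pair_symmDiff_left hab]
  have hb1 : b ∈ par L1 := by rw [hp1']; exact Finset.mem_singleton_self b
  obtain ⟨n, L₀, he0, hp0, hw0, hl0⟩ := extract A hgen hH L1 b hb1
  have hpar0 : par L₀ = ∅ := by rw [hp0, hp1', singleton_symmDiff_self]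
  refine ⟨m, n, L₀, hpar0, ?_⟩
  have hwp : wtL [(a, m), (b, n)] = (m : ℕ) + (n : ℕ) := wtL_pair a b m n
  have hlp : ([(a, m), (b, n)] : List (Fin ℓ × ℕ+)).length = 2 := rfl
  set P : List (Fin ℓ × ℕ+) := [(a, m), (b, n)] with hP
  have hvP : wrd A hgen P ∈ Nsp A hgen {a, b} ((wtL P : ℕ) : ℤ) (((P.length : ℕ)) : ℤ) :=
    word_mem_Nsp A hgen (par_pair hab m n) le_rfl le_rfl
  have hwrdL : wrd A hgen L = wordAct (hf A hgen) L₀ (wrd A hgen P) := by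
    have h2 : wrd A hgen P
        = A.Y (hgen a) (-((m : ℕ) : ℤ)) (A.Y (hgen b) (-((n : ℕ) : ℤ)) (A.one)) := rfl
    rw [h2]
    rw [wordAct_push A hgen hH L₀ a (-((m : ℕ) : ℤ)) (by have := pnat_one_le m; omega)]
    rw [wordAct_push A hgen hH L₀ b (-((n : ℕ) : ℤ)) (by have := pnat_one_le n; omega)]
    have h3 : wordAct (hf A hgen) L₀ A.one = wrd A hgen L₀ := rfl
    rw [h3, ← he0, ← he1]
  set jw : ℤ := ((wtL L₀ : ℕ) : ℤ) with hjw
  set F : ℕ → V := fun i => zchoose jw i • A.Y (wrd A hgen L₀) ((i : ℤ) - 1) (wrd A hgen P)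
    with hF
  have hstar : A.star (wrd A hgen L₀) (wrd A hgen P) = ∑ᶠ i, F i := by
    rw [star_eq_mulAux_of_mem A (word_wt A hgen hH L₀) (wrd A hgen P)]
    rfl
  have hsupp : (Function.support F).Finite := mulAux_support A jw _ _
  have hF0 : F 0 = A.Y (wrd A hgen L₀) (-1) (wrd A hgen P) := by
    rw [hF]
    norm_num [zchoose_zero']
  have hre : A.star (wrd A hgen L₀) (wrd A hgen P) - wrd A hgen L
      = (A.Y (wrd A hgen L₀) (-1) (wrd A hgen P) - wordAct (hf A hgen) L₀ (wrd A hgen P))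
        + ∑ᶠ i, (if i = 0 then 0 else F i) := by
    rw [hstar, finsum_split_zero F hsupp, hF0, hwrdL]
    abel
  rw [hre]
  apply Submodule.add_mem
  · have h1 := refMode A hgen hH L₀ {a, b} ((wtL P : ℕ) : ℤ) ((P.length : ℕ) : ℤ) _ hvP
    refine sup_le_sup (Nsp_le_of A hgen ?_ ?_ ?_) (Nsp_le_of A hgen ?_ ?_ ?_) h1
    · rw [hpar0, empty_symmDiff]
    · push_cast; omega
    · push_cast [hlp]; omega
    · rw [hpar0, empty_symmDiff]
    · push_cast; omega
    · push_cast [hlp]; omega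
  · apply Submodule.mem_sup_left
    apply finsum_mem_submodule
    intro i
    by_cases hi : i = 0
    · rw [if_pos hi]; exact Submodule.zero_mem _
    · rw [if_neg hi, hF]
      apply Submodule.smul_mem
      have hi1 : 1 ≤ (i : ℤ) := by exact_mod_cast Nat.one_le_iff_ne_zero.mpr hi
      have h1 := memMode A hgen hH L₀ ((i : ℤ) - 1) {a, b} ((wtL P : ℕ) : ℤ)
        ((P.length : ℕ) : ℤ) _ hvP
      refine Nsp_le_of A hgen ?_ ?_ ?_ h1
      · rw [hpar0, empty_symmDiff]
      · push_cast; omega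
      · push_cast [hlp]; omega

end Heis4

end StT8
noncomputable section
namespace StT8

set_option linter.unusedSectionVars false
set_option maxHeartbeats 1000000

open Finset

variable {ℓ : ℕ} {V : Type} [AddCommGroup V] [Module ℂ V]

section Heis5

variable (A : VOA V) (hgen : Fin ℓ → V)

lemma theta_wrd {θ : V ≃ₗ[ℂ] V} (tA : IsThetaAut A hgen θ) :
    ∀ L : List (Fin ℓ × ℕ+), θ (wrd A hgen L) = ((-1 : ℂ) ^ L.length) • wrd A hgen L := by
  intro L
  induction L with
  | nil =>
    rw [wrd_nil, tA.map_one, List.length_nil, pow_zero, one_smul]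
  | cons hd L' IH =>
    obtain ⟨c, k⟩ := hd
    rw [wrd_cons, tA.map_Y, tA.map_gen, IH]
    have h1 : A.Y (-hgen c) = -A.Y (hgen c) := map_neg A.Y (hgen c)
    rw [h1]
    show (-(A.Y (hgen c))) (-((k : ℕ) : ℤ)) (((-1 : ℂ) ^ L'.length) • wrd A hgen L')
      = ((-1 : ℂ) ^ (L'.length + 1)) • A.Y (hgen c) (-((k : ℕ) : ℤ)) (wrd A hgen L')
    rw [Pi.neg_apply, LinearMap.neg_apply, map_smul, pow_succ, mul_smul, neg_one_smul,
      smul_neg]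

lemma even_length_of_par_empty (L : List (Fin ℓ × ℕ+)) (h : par L = ∅) :
    Even L.length := by
  classical
  have hcount : ∀ c : Fin ℓ, Even ((L.map Prod.fst).count c) := by
    intro c
    by_contra hc
    have : c ∈ par L := (mem_par_iff L c).mpr hc
    rw [h] at this
    exact absurd this (Finset.notMem_empty c)
  have hlen : (L.map Prod.fst).length = L.length := List.length_map _
  rw [← hlen, ← List.sum_toFinset_count_eq_length (L.map Prod.fst)]
  refine Finset.sum_induction _ Even (fun a b ha hb => ha.add hb) Even.zero ?_
  intro c _
  exact hcount c

lemma Nsp_pair_le_wordSpan {a b : Fin ℓ} (hab : a ≠ b) (w l : ℤ) :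
    Nsp A hgen (symmDiff (par [(a, (1 : ℕ+)), (b, (1 : ℕ+))]) ∅) w l
      ≤ wordSpanV A hgen {a, b} := by
  refine le_trans (Nsp_le_of A hgen ?_ le_rfl le_rfl) (Nsp_le_wordSpanV A hgen _ _ _)
  rw [symmDiff_empty', par_pair hab]

lemma SVstar_right_mem (hH : IsHeisenberg A hgen) {a b : Fin ℓ} (hab : a ≠ b) (m n : ℕ+)
    {v : V} (hv : v ∈ wordSpanV A hgen (∅ : Finset (Fin ℓ))) :
    A.star (wrd A hgen [(a, m), (b, n)]) v ∈ wordSpanV A hgen {a, b} := by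
  rw [star_eq_mulAux_of_mem A (word_wt A hgen hH [(a, m), (b, n)])]
  induction hv using Submodule.span_induction with
  | mem x hx =>
    obtain ⟨L₀, hcond, hx0⟩ := hx
    have hpar0 : par L₀ = ∅ := (par_eq_iff _ _).mpr hcond
    have hx0' : x = wrd A hgen L₀ := hx0
    subst hx0'
    unfold VOA.mulAux
    apply finsum_mem_submodule
    intro i
    apply Submodule.smul_mem
    have h1 := memMode A hgen hH [(a, m), (b, n)] ((i : ℤ) - 1) ∅ ((wtL L₀ : ℕ) : ℤ)
      ((L₀.length : ℕ) : ℤ) _ (word_mem_Nsp A hgen hpar0 le_rfl le_rfl)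
    refine le_trans (Nsp_le_of A hgen ?_ le_rfl le_rfl)
      (Nsp_le_wordSpanV A hgen {a, b} _ _) h1
    rw [symmDiff_empty', par_pair hab]
  | zero => rw [mulAux_zero_right]; exact Submodule.zero_mem _
  | add x y hx hy ihx ihy => rw [mulAux_add_right]; exact Submodule.add_mem _ ihx ihy
  | smul c x hx ihx => rw [mulAux_smul_right]; exact Submodule.smul_mem _ _ ihx

lemma SVstar_left_mem (hH : IsHeisenberg A hgen) {a b : Fin ℓ} (hab : a ≠ b) (m n : ℕ+)
    {v : V} (hv : v ∈ wordSpanV A hgen (∅ : Finset (Fin ℓ))) :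
    A.star v (wrd A hgen [(a, m), (b, n)]) ∈ wordSpanV A hgen {a, b} := by
  induction hv using Submodule.span_induction with
  | mem x hx =>
    obtain ⟨L₀, hcond, hx0⟩ := hx
    have hpar0 : par L₀ = ∅ := (par_eq_iff _ _).mpr hcond
    have hx0' : x = wrd A hgen L₀ := hx0
    subst hx0'
    rw [star_eq_mulAux_of_mem A (word_wt A hgen hH L₀)]
    unfold VOA.mulAux
    apply finsum_mem_submodule
    intro i
    apply Submodule.smul_mem
    have hvP : wrd A hgen [(a, m), (b, n)]
        ∈ Nsp A hgen {a, b} ((wtL [(a, m), (b, n)] : ℕ) : ℤ)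
          ((([(a, m), (b, n)] : List (Fin ℓ × ℕ+)).length : ℕ) : ℤ) :=
      word_mem_Nsp A hgen (par_pair hab m n) le_rfl le_rfl
    have h1 := memMode A hgen hH L₀ ((i : ℤ) - 1) {a, b} _ _ _ hvP
    refine le_trans (Nsp_le_of A hgen ?_ le_rfl le_rfl)
      (Nsp_le_wordSpanV A hgen {a, b} _ _) h1
    rw [hpar0, empty_symmDiff]
  | zero => rw [star_zero_left]; exact Submodule.zero_mem _
  | add x y hx hy ihx ihy => rw [star_add_left]; exact Submodule.add_mem _ ihx ihy
  | smul c x hx ihx => rw [star_smul_left]; exact Submodule.smul_mem _ _ ihx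

end Heis5

section Compat

variable {W : Type} [AddCommGroup W] [Module ℂ W]
variable (A : VOA V) (B : VOA W) {θ : V ≃ₗ[ℂ] V} (ι : W →ₗ[ℂ] V)

lemma hcomp_compat (hF : IsFixedSubVOA A θ B ι) (k : ℤ) (u : W) :
    ι (B.hcomp k u) = A.hcomp k (ι u) := by
  have htop : u ∈ ⨆ j, B.wt j := by
    rw [DirectSum.IsInternal.submodule_iSup_eq_top B.internal]
    trivial
  refine Submodule.iSup_induction (motive := fun u => ι (B.hcomp k u) = A.hcomp k (ι u))
    _ htop ?_ ?_ ?_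
  · intro j x hx
    rw [hcomp_eq_of_mem B hx k, hcomp_eq_of_mem A ((hF.map_wt j x).mp hx) k]
    by_cases h : j = k
    · rw [if_pos h, if_pos h]
    · rw [if_neg h, if_neg h, map_zero]
  · show ι (B.hcomp k (0 : W)) = A.hcomp k (ι (0 : W))
    rw [hcomp_zero, map_zero]
    exact (hcomp_zero A k).symm
  · intro x y hx hy
    show ι (B.hcomp k (x + y)) = A.hcomp k (ι (x + y))
    rw [hcomp_add, map_add, map_add, hcomp_add, hx, hy]

lemma mulAux_compat (hF : IsFixedSubVOA A θ B ι) (k : ℤ) (u v : W) :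
    ι (B.mulAux k u v) = A.mulAux k (ι u) (ι v) := by
  unfold VOA.mulAux
  rw [map_finsum_linear ι _ (mulAux_support B k u v)]
  apply finsum_congr
  intro i
  rw [map_smul, hF.map_Y]

lemma star_compat (hF : IsFixedSubVOA A θ B ι) (u v : W) :
    ι (B.star u v) = A.star (ι u) (ι v) := by
  unfold VOA.star
  rw [map_finsum_linear ι _ (star_support B u v)]
  have h1 : ∀ k : ℤ, ι (B.mulAux k (B.hcomp k u) v)
      = A.mulAux k (A.hcomp k (ι u)) (ι v) := by
    intro k
    rw [mulAux_compat A B ι hF, hcomp_compat A B ι hF]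
  rw [finsum_congr h1]

end Compat

end StT8
/-- Lemma 4.1.5 and Proposition 4.1.6. Let `a ≠ b`,
`α = {a,b}`, and let `𝒮_{ab} ⊆ A(𝓗⁺)` be the span of the elements
`S_{ab}(m,n) + O(𝓗⁺)`, `m,n ≥ 1`. Then `A[𝓦^α] = 𝒮_{ab}·A[𝓦]` and
`A[𝓦^α] = A[𝓦]·𝒮_{ab}`: modulo `O(𝓗⁺)`, the image of `𝓦^α` coincides with the
span of the products `S_{ab}(m,n) * y` (resp. `y * S_{ab}(m,n)`) with
`y ∈ 𝓦`. -/
theorem statement8 (ℓ : ℕ) {V W : Type} [AddCommGroup V] [Module ℂ V]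
    [AddCommGroup W] [Module ℂ W] (S : HeisenbergPlusSetting ℓ V W)
    (s : Fin ℓ → Fin ℓ → ℤ → ℤ → W)
    (hs : ∀ a b m n, S.ι (s a b m n) = SV S.A S.hgen a b m n)
    (a b : Fin ℓ) (hab : a ≠ b) :
    let Wsp : Submodule ℂ V := wordSpanV S.A S.hgen (∅ : Finset (Fin ℓ))
    let Walpha : Submodule ℂ V := wordSpanV S.A S.hgen {a, b}
    let Sright : Submodule ℂ W := Submodule.span ℂ
      {z : W | ∃ m n : ℤ, 1 ≤ m ∧ 1 ≤ n ∧
        ∃ y : W, S.ι y ∈ Wsp ∧ z = S.B.star (s a b m n) y}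
    let Sleft : Submodule ℂ W := Submodule.span ℂ
      {z : W | ∃ m n : ℤ, 1 ≤ m ∧ 1 ≤ n ∧
        ∃ y : W, S.ι y ∈ Wsp ∧ z = S.B.star y (s a b m n)}
    (∀ x : W, S.ι x ∈ Walpha →
      (∃ z ∈ Sright, x - z ∈ S.B.Osub) ∧ (∃ z ∈ Sleft, x - z ∈ S.B.Osub)) ∧
    (∀ z : W, z ∈ Sright ∨ z ∈ Sleft →
      ∃ x : W, S.ι x ∈ Walpha ∧ z - x ∈ S.B.Osub) := by
  classical
  intro Wsp Walpha Sright Sleft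
  -- θ-fixed preimages of even words
  have hrange : ∀ L₀ : List (Fin ℓ × ℕ+), StT8.par L₀ = ∅ →
      ∃ y : W, S.ι y = StT8.wrd S.A S.hgen L₀ ∧ S.ι y ∈ Wsp := by
    intro L₀ h0
    have hfix : StT8.wrd S.A S.hgen L₀ ∈ LinearMap.range S.ι := by
      rw [S.fixedSub.range_eq, Module.End.mem_eigenspace_iff]
      show S.θ (StT8.wrd S.A S.hgen L₀) = (1 : ℂ) • StT8.wrd S.A S.hgen L₀
      rw [StT8.theta_wrd S.A S.hgen S.thetaAut L₀,
        Even.neg_one_pow (StT8.even_length_of_par_empty L₀ h0), one_smul]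
    obtain ⟨y, hy⟩ := hfix
    refine ⟨y, hy, ?_⟩
    show S.ι y ∈ wordSpanV S.A S.hgen (∅ : Finset (Fin ℓ))
    rw [hy]
    exact Submodule.subset_span ⟨L₀, (StT8.par_eq_iff _ _).mp h0, rfl⟩
  -- α-words land in the image of Sright
  have hWordR : ∀ L : List (Fin ℓ × ℕ+), StT8.par L = {a, b} →
      StT8.wrd S.A S.hgen L ∈ Submodule.map S.ι Sright := by
    apply StT8.mainInd S.A S.hgen a b hab
    intro L hL
    obtain ⟨m, n, L₀, hpar0, hmem⟩ := StT8.hkeyRight S.A S.hgen S.heis hab L hL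
    obtain ⟨y, hy, hyW⟩ := hrange L₀ hpar0
    refine ⟨S.ι (S.B.star (s a b ((m : ℕ) : ℤ) ((n : ℕ) : ℤ)) y), ?_, ?_⟩
    · refine Submodule.mem_map_of_mem (Submodule.subset_span ?_)
      exact ⟨((m : ℕ) : ℤ), ((n : ℕ) : ℤ), StT8.pnat_one_le m, StT8.pnat_one_le n,
        y, hyW, rfl⟩
    · rw [StT8.star_compat S.A S.B S.ι S.fixedSub, hs, hy, StT8.SV_eq_wrd]
      exact hmem
  -- α-words land in the image of Sleft
  have hWordL : ∀ L : List (Fin ℓ × ℕ+), StT8.par L = {a, b} →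
      StT8.wrd S.A S.hgen L ∈ Submodule.map S.ι Sleft := by
    apply StT8.mainInd S.A S.hgen a b hab
    intro L hL
    obtain ⟨m, n, L₀, hpar0, hmem⟩ := StT8.hkeyLeft S.A S.hgen S.heis hab L hL
    obtain ⟨y, hy, hyW⟩ := hrange L₀ hpar0
    refine ⟨S.ι (S.B.star y (s a b ((m : ℕ) : ℤ) ((n : ℕ) : ℤ))), ?_, ?_⟩
    · refine Submodule.mem_map_of_mem (Submodule.subset_span ?_)
      exact ⟨((m : ℕ) : ℤ), ((n : ℕ) : ℤ), StT8.pnat_one_le m, StT8.pnat_one_le n,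
        y, hyW, rfl⟩
    · rw [StT8.star_compat S.A S.B S.ι S.fixedSub, hs, hy, StT8.SV_eq_wrd]
      exact hmem
  have hWR : Walpha ≤ Submodule.map S.ι Sright := by
    show wordSpanV S.A S.hgen {a, b} ≤ _
    refine Submodule.span_le.mpr ?_
    rintro x ⟨L, hcond, rfl⟩
    exact hWordR L ((StT8.par_eq_iff _ _).mpr hcond)
  have hWL : Walpha ≤ Submodule.map S.ι Sleft := by
    show wordSpanV S.A S.hgen {a, b} ≤ _
    refine Submodule.span_le.mpr ?_
    rintro x ⟨L, hcond, rfl⟩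
    exact hWordL L ((StT8.par_eq_iff _ _).mpr hcond)
  -- Sright and Sleft map into Walpha
  have h2R : ∀ z ∈ Sright, S.ι z ∈ Walpha := by
    have hle : Sright ≤ Submodule.comap S.ι Walpha := by
      refine Submodule.span_le.mpr ?_
      rintro x ⟨mz, nz, hm, hn, y, hyW, rfl⟩
      show S.ι (S.B.star (s a b mz nz) y) ∈ Walpha
      rw [StT8.star_compat S.A S.B S.ι S.fixedSub, hs]
      obtain ⟨m', hm'⟩ : ∃ m' : ℕ+, ((m' : ℕ) : ℤ) = mz :=
        ⟨⟨mz.toNat, by omega⟩, by show ((mz.toNat : ℕ) : ℤ) = mz; omega⟩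
      obtain ⟨n', hn'⟩ : ∃ n' : ℕ+, ((n' : ℕ) : ℤ) = nz :=
        ⟨⟨nz.toNat, by omega⟩, by show ((nz.toNat : ℕ) : ℤ) = nz; omega⟩
      rw [← hm', ← hn', StT8.SV_eq_wrd]
      exact StT8.SVstar_right_mem S.A S.hgen S.heis hab m' n' hyW
    intro z hz
    exact hle hz
  have h2L : ∀ z ∈ Sleft, S.ι z ∈ Walpha := by
    have hle : Sleft ≤ Submodule.comap S.ι Walpha := by
      refine Submodule.span_le.mpr ?_
      rintro x ⟨mz, nz, hm, hn, y, hyW, rfl⟩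
      show S.ι (S.B.star y (s a b mz nz)) ∈ Walpha
      rw [StT8.star_compat S.A S.B S.ι S.fixedSub, hs]
      obtain ⟨m', hm'⟩ : ∃ m' : ℕ+, ((m' : ℕ) : ℤ) = mz :=
        ⟨⟨mz.toNat, by omega⟩, by show ((mz.toNat : ℕ) : ℤ) = mz; omega⟩
      obtain ⟨n', hn'⟩ : ∃ n' : ℕ+, ((n' : ℕ) : ℤ) = nz :=
        ⟨⟨nz.toNat, by omega⟩, by show ((nz.toNat : ℕ) : ℤ) = nz; omega⟩
      rw [← hm', ← hn', StT8.SV_eq_wrd]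
      exact StT8.SVstar_left_mem S.A S.hgen S.heis hab m' n' hyW
    intro z hz
    exact hle hz
  constructor
  · intro x hx
    constructor
    · obtain ⟨x', hx', hxx⟩ := Submodule.mem_map.mp (hWR hx)
      have hxe : x' = x := S.fixedSub.inj hxx
      subst hxe
      exact ⟨x', hx', by rw [sub_self]; exact Submodule.zero_mem _⟩
    · obtain ⟨x', hx', hxx⟩ := Submodule.mem_map.mp (hWL hx)
      have hxe : x' = x := S.fixedSub.inj hxx
      subst hxe
      exact ⟨x', hx', by rw [sub_self]; exact Submodule.zero_mem _⟩
  · rintro z (hz | hz)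
    · exact ⟨z, h2R z hz, by rw [sub_self]; exact Submodule.zero_mem _⟩
    · exact ⟨z, h2L z hz, by rw [sub_self]; exact Submodule.zero_mem _⟩
end
end
end
end
end
end
end
end

section
/- Let a, b, c, d be distinct indices in {1,…,ℓ} and set S_{abcd}(m,n,r,s) = h_a(−m)h_b(−n)h_c(−r)h_d(−s)𝟏 for m,n,r,s ∈ ℤ₊. Then in A(𝓗^+), S_{abcd}(m,n,r,s) + O(𝓗^+) = (−1)^{m+n+r+s} S_{abcd}(1,1,1,1) + O(𝓗^+). -/
/-!
Common framework: vertex operator algebras over ℂ encoded via their modes,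
weak/admissible/ordinary modules, twisted modules, Zhu's algebra data,
and the free bosonic (Heisenberg) vertex operator algebra `𝓗 = M(1)` of rank `ℓ`
together with its `θ`-fixed subalgebra `𝓗⁺`.
-/

open scoped BigOperators DirectSum TensorProduct

namespace St9

noncomputable section

variable {ℓ : ℕ} {V W : Type} [AddCommGroup V] [Module ℂ V] [AddCommGroup W] [Module ℂ W]

lemma zchoose_zero' (m : ℤ) : zchoose m 0 = 1 := by simp [zchoose, qchoose]

lemma zchoose_one' (m : ℤ) : zchoose m 1 = (m : ℂ) := by simp [zchoose, qchoose]

lemma zchoose_zero_left (i : ℕ) (h : i ≠ 0) : zchoose 0 i = 0 := by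
  unfold zchoose
  norm_cast
  induction i with
  | zero => exact absurd rfl h
  | succ n ih =>
    rcases Nat.eq_zero_or_pos n with h0 | h0
    · subst h0; simp [qchoose]
    · rw [qchoose, ih (by omega)]; ring

lemma finsum_zchoose_zero (f : ℕ → V) : ∑ᶠ i : ℕ, zchoose 0 i • f i = f 0 := by
  rw [finsum_eq_single _ 0 fun i hi => by rw [zchoose_zero_left i hi, zero_smul]]
  rw [zchoose_zero', one_smul]

variable (S : HeisenbergPlusSetting ℓ V W)

lemma comm_gen {x y : Fin ℓ} (h : x ≠ y) (p q : ℤ) (v : V) :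
    S.A.Y (S.hgen x) p (S.A.Y (S.hgen y) q v)
      = S.A.Y (S.hgen y) q (S.A.Y (S.hgen x) p v) := by
  have hc := S.heis.heis_comm x y p q
  rw [if_neg (fun hh => h hh.1), zero_smul, sub_eq_zero] at hc
  have := LinearMap.ext_iff.1 hc v
  simpa [Module.End.mul_apply] using this

lemma ann_word {x z w : Fin ℓ} (hxz : x ≠ z) (hxw : x ≠ w) {k : ℤ} (hk : 0 ≤ k) (p q : ℤ) :
    S.A.Y (S.hgen x) k (S.A.Y (S.hgen z) p (S.A.Y (S.hgen w) q S.A.one)) = 0 := by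
  rw [comm_gen S hxz, comm_gen S hxw, S.A.create_ge _ k hk, map_zero, map_zero]

lemma mode1_gen (y : Fin ℓ) (N k : ℤ) (v : V)
    (hv : ∀ j : ℤ, 0 ≤ j → S.A.Y (S.hgen y) j v = 0) :
    S.A.Y (S.A.Y (S.hgen y) (-N) S.A.one) k v
      = ∑ᶠ i : ℕ, ((-1 : ℂ) ^ i * zchoose (-N) i) •
          S.A.Y (S.hgen y) (-N - i) (if k + (i : ℤ) = -1 then v else 0) := by
  have hb := S.A.borcherds (S.hgen y) S.A.one v (-N) 0 k
  rw [finsum_zchoose_zero] at hb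
  simp only [Nat.cast_zero, add_zero, sub_zero, zero_add] at hb
  rw [hb]
  refine finsum_congr fun i => ?_
  rw [hv _ (Int.natCast_nonneg i), map_zero, smul_zero, sub_zero, S.A.vacuum_act,
    apply_ite (fun e : Module.End ℂ V => e v)]
  simp

lemma mode1_ge (y : Fin ℓ) (N k : ℤ) (v : V)
    (hv : ∀ j : ℤ, 0 ≤ j → S.A.Y (S.hgen y) j v = 0) (hk : 0 ≤ k) :
    S.A.Y (S.A.Y (S.hgen y) (-N) S.A.one) k v = 0 := by
  rw [mode1_gen S y N k v hv]
  refine finsum_eq_zero_of_forall_eq_zero fun i => ?_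
  rw [if_neg (by omega), map_zero, smul_zero]

lemma mode1_neg1 (y : Fin ℓ) (N : ℤ) (v : V)
    (hv : ∀ j : ℤ, 0 ≤ j → S.A.Y (S.hgen y) j v = 0) :
    S.A.Y (S.A.Y (S.hgen y) (-N) S.A.one) (-1) v = S.A.Y (S.hgen y) (-N) v := by
  rw [mode1_gen S y N (-1) v hv,
    finsum_eq_single _ 0 (fun i hi => by rw [if_neg (by omega), map_zero, smul_zero])]
  norm_num [zchoose_zero']

lemma mode1_neg2 (y : Fin ℓ) (N : ℤ) (v : V)
    (hv : ∀ j : ℤ, 0 ≤ j → S.A.Y (S.hgen y) j v = 0) :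
    S.A.Y (S.A.Y (S.hgen y) (-N) S.A.one) (-2) v = (N : ℂ) • S.A.Y (S.hgen y) (-N - 1) v := by
  rw [mode1_gen S y N (-2) v hv,
    finsum_eq_single _ 1 (fun i hi => by rw [if_neg (by omega), map_zero, smul_zero])]
  norm_num [zchoose_one']

lemma mode2_gen (x y : Fin ℓ) (M N k : ℤ) (v : V)
    (hvx : ∀ j : ℤ, 0 ≤ j → S.A.Y (S.hgen x) j v = 0) :
    S.A.Y (S.A.Y (S.hgen x) (-M) (S.A.Y (S.hgen y) (-N) S.A.one)) k v
      = ∑ᶠ i : ℕ, ((-1 : ℂ) ^ i * zchoose (-M) i) •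
          S.A.Y (S.hgen x) (-M - i)
            (S.A.Y (S.A.Y (S.hgen y) (-N) S.A.one) (k + i) v) := by
  have hb := S.A.borcherds (S.hgen x) (S.A.Y (S.hgen y) (-N) S.A.one) v (-M) 0 k
  rw [finsum_zchoose_zero] at hb
  simp only [Nat.cast_zero, add_zero, sub_zero, zero_add] at hb
  rw [hb]
  exact finsum_congr fun i => by
    rw [hvx _ (Int.natCast_nonneg i), map_zero, smul_zero, sub_zero]

lemma mode2_ge (x y : Fin ℓ) (M N k : ℤ) (v : V)
    (hvx : ∀ j : ℤ, 0 ≤ j → S.A.Y (S.hgen x) j v = 0)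
    (hvy : ∀ j : ℤ, 0 ≤ j → S.A.Y (S.hgen y) j v = 0) (hk : 0 ≤ k) :
    S.A.Y (S.A.Y (S.hgen x) (-M) (S.A.Y (S.hgen y) (-N) S.A.one)) k v = 0 := by
  rw [mode2_gen S x y M N k v hvx]
  refine finsum_eq_zero_of_forall_eq_zero fun i => ?_
  rw [mode1_ge S y N _ v hvy (by omega), map_zero, smul_zero]

lemma mode2_neg1 (x y : Fin ℓ) (M N : ℤ) (v : V)
    (hvx : ∀ j : ℤ, 0 ≤ j → S.A.Y (S.hgen x) j v = 0)
    (hvy : ∀ j : ℤ, 0 ≤ j → S.A.Y (S.hgen y) j v = 0) :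
    S.A.Y (S.A.Y (S.hgen x) (-M) (S.A.Y (S.hgen y) (-N) S.A.one)) (-1) v
      = S.A.Y (S.hgen x) (-M) (S.A.Y (S.hgen y) (-N) v) := by
  rw [mode2_gen S x y M N (-1) v hvx,
    finsum_eq_single _ 0 (fun i hi => by
      rw [mode1_ge S y N _ v hvy (by omega), map_zero, smul_zero])]
  norm_num [zchoose_zero', mode1_neg1 S y N v hvy]

lemma mode2_neg2 (x y : Fin ℓ) (M N : ℤ) (v : V)
    (hvx : ∀ j : ℤ, 0 ≤ j → S.A.Y (S.hgen x) j v = 0)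
    (hvy : ∀ j : ℤ, 0 ≤ j → S.A.Y (S.hgen y) j v = 0) :
    S.A.Y (S.A.Y (S.hgen x) (-M) (S.A.Y (S.hgen y) (-N) S.A.one)) (-2) v
      = (M : ℂ) • S.A.Y (S.hgen x) (-M - 1) (S.A.Y (S.hgen y) (-N) v)
        + (N : ℂ) • S.A.Y (S.hgen x) (-M) (S.A.Y (S.hgen y) (-N - 1) v) := by
  rw [mode2_gen S x y M N (-2) v hvx]
  rw [finsum_eq_sum_of_support_subset _ (s := ({0, 1} : Finset ℕ)) ?hs]
  case hs =>
    rw [Function.support_subset_iff']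
    intro i hi
    have h2 : 2 ≤ i := by
      simp only [Finset.coe_insert, Finset.coe_singleton, Set.mem_insert_iff,
        Set.mem_singleton_iff, not_or] at hi
      omega
    rw [mode1_ge S y N _ v hvy (by omega), map_zero, smul_zero]
  rw [Finset.sum_pair (by norm_num : (0 : ℕ) ≠ 1)]
  norm_num [zchoose_zero', zchoose_one', mode1_neg1 S y N v hvy, mode1_neg2 S y N v hvy]
  module

lemma wt_u2 (x y : Fin ℓ) (M N : ℤ) :
    S.A.Y (S.hgen x) (-M) (S.A.Y (S.hgen y) (-N) S.A.one) ∈ S.A.wt (M + N) := by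
  have h1 := S.A.mode_wt 1 (S.hgen y) (S.heis.wt_one y) 0 (-N) S.A.one S.A.one_wt
  have h2 := S.A.mode_wt 1 (S.hgen x) (S.heis.wt_one x) _ (-M) _ h1
  have e : 0 + 1 - -N - 1 + 1 - -M - 1 = M + N := by ring
  rwa [e] at h2

lemma theta_Y (x : Fin ℓ) (k : ℤ) (v : V) :
    S.θ (S.A.Y (S.hgen x) k v) = - S.A.Y (S.hgen x) k (S.θ v) := by
  rw [S.thetaAut.map_Y, S.thetaAut.map_gen, map_neg S.A.Y, Pi.neg_apply, LinearMap.neg_apply]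

lemma theta_pair (x y : Fin ℓ) (p q : ℤ) :
    S.θ (S.A.Y (S.hgen x) p (S.A.Y (S.hgen y) q S.A.one))
      = S.A.Y (S.hgen x) p (S.A.Y (S.hgen y) q S.A.one) := by
  rw [theta_Y, theta_Y, S.thetaAut.map_one, map_neg, neg_neg]

lemma exists_pre (v : V) (h : S.θ v = v) : ∃ u : W, S.ι u = v := by
  have hm : v ∈ LinearMap.range S.ι := by
    rw [S.fixedSub.range_eq]
    exact Module.End.mem_eigenspace_iff.mpr (by simpa using h)
  exact hm

/-- The word `h_x(-m)h_y(-n)h_z(-r)h_w(-s)𝟏`. -/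
def wd (x y z w : Fin ℓ) (m n r s : ℤ) : V :=
  S.A.Y (S.hgen x) (-m) (S.A.Y (S.hgen y) (-n)
    (S.A.Y (S.hgen z) (-r) (S.A.Y (S.hgen w) (-s) S.A.one)))

lemma wd_swap12 (x y z w : Fin ℓ) (hxy : x ≠ y) (m n r s : ℤ) :
    wd S x y z w m n r s = wd S y x z w n m r s := by
  simp only [wd]; rw [comm_gen S hxy]

lemma wd_swap23 (x y z w : Fin ℓ) (hyz : y ≠ z) (m n r s : ℤ) :
    wd S x y z w m n r s = wd S x z y w m r n s := by
  simp only [wd]; rw [comm_gen S hyz]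

lemma wd_swap34 (x y z w : Fin ℓ) (hzw : z ≠ w) (m n r s : ℤ) :
    wd S x y z w m n r s = wd S x y w z m n s r := by
  simp only [wd]; rw [comm_gen S hzw]

lemma key (x y z w : Fin ℓ) (hxz : x ≠ z) (hxw : x ≠ w) (hyz : y ≠ z) (hyw : y ≠ w)
    (M N R T : ℤ) :
    (M : ℂ) • wd S x y z w (M + 1) N R T + (N : ℂ) • wd S x y z w M (N + 1) R T
      + ((M : ℂ) + (N : ℂ)) • wd S x y z w M N R T ∈ Submodule.map S.ι S.B.Osub := by
  have hvx : ∀ j : ℤ, 0 ≤ j →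
      S.A.Y (S.hgen x) j (S.A.Y (S.hgen z) (-R) (S.A.Y (S.hgen w) (-T) S.A.one)) = 0 :=
    fun j hj => ann_word S hxz hxw hj _ _
  have hvy : ∀ j : ℤ, 0 ≤ j →
      S.A.Y (S.hgen y) j (S.A.Y (S.hgen z) (-R) (S.A.Y (S.hgen w) (-T) S.A.one)) = 0 :=
    fun j hj => ann_word S hyz hyw hj _ _
  obtain ⟨u', hu'⟩ := exists_pre S _ (theta_pair S x y (-M) (-N))
  obtain ⟨v', hv'⟩ := exists_pre S _ (theta_pair S z w (-R) (-T))
  have hwt : u' ∈ S.B.wt (M + N) := by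
    rw [S.fixedSub.map_wt, hu']; exact wt_u2 S x y M N
  have hOmem : S.B.circAux (M + N) u' v' ∈ S.B.Osub :=
    Submodule.subset_span ⟨M + N, u', v', hwt, rfl⟩
  have hzero : ∀ i : ℕ, 2 ≤ i → S.B.Y u' ((i : ℤ) - 2) v' = 0 := by
    intro i hi
    apply S.fixedSub.inj
    rw [S.fixedSub.map_Y, hu', hv', map_zero]
    exact mode2_ge S x y M N _ _ hvx hvy (by omega)
  have hcirc : S.ι (S.B.circAux (M + N) u' v')
      = (M : ℂ) • wd S x y z w (M + 1) N R T + (N : ℂ) • wd S x y z w M (N + 1) R T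
        + ((M : ℂ) + (N : ℂ)) • wd S x y z w M N R T := by
    rw [VOA.circAux]
    rw [finsum_eq_sum_of_support_subset _ (s := ({0, 1} : Finset ℕ)) ?hs]
    case hs =>
      rw [Function.support_subset_iff']
      intro i hi
      have h2 : 2 ≤ i := by
        simp only [Finset.coe_insert, Finset.coe_singleton, Set.mem_insert_iff,
          Set.mem_singleton_iff, not_or] at hi
        omega
      rw [hzero i h2, smul_zero]
    rw [Finset.sum_pair (by norm_num : (0 : ℕ) ≠ 1), map_add, map_smul, map_smul,
      S.fixedSub.map_Y, S.fixedSub.map_Y, hu', hv']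
    rw [show ((0:ℕ):ℤ) - 2 = -2 by norm_num, show ((1:ℕ):ℤ) - 2 = -1 by norm_num,
      zchoose_zero', zchoose_one', mode2_neg1 S x y M N _ hvx hvy,
      mode2_neg2 S x y M N _ hvx hvy, one_smul]
    simp only [wd]
    rw [show -(M + 1) = -M - 1 by ring, show -(N + 1) = -N - 1 by ring]
    push_cast
    module
  exact ⟨_, hOmem, hcirc⟩

lemma triple_combine {U : Submodule ℂ V} {T1 T2 T3 T0 : V} {α β γ : ℂ}
    (h1 : α • T1 + β • T2 + (α + β) • T0 ∈ U)
    (h2 : α • T1 + γ • T3 + (α + γ) • T0 ∈ U)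
    (h3 : β • T2 + γ • T3 + (β + γ) • T0 ∈ U)
    (hα : α ≠ 0) : T1 + T0 ∈ U := by
  have hmem := U.sub_mem (U.add_mem h1 h2) h3
  have heq : ((2 : ℂ) * α) • (T1 + T0)
      = (α • T1 + β • T2 + (α + β) • T0) + (α • T1 + γ • T3 + (α + γ) • T0)
        - (β • T2 + γ • T3 + (β + γ) • T0) := by module
  have h := U.smul_mem ((2 * α)⁻¹) hmem
  rwa [← heq, inv_smul_smul₀ (mul_ne_zero two_ne_zero hα)] at h


lemma step1 (a b c d : Fin ℓ) (hab : a ≠ b) (hac : a ≠ c) (had : a ≠ d)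
    (hbc : b ≠ c) (hbd : b ≠ d) (hcd : c ≠ d) (m n r s : ℤ) (hm : 1 ≤ m) :
    wd S a b c d (m + 1) n r s + wd S a b c d m n r s ∈ Submodule.map S.ι S.B.Osub := by
  have K1 := key S a b c d hac had hbc hbd m n r s
  have K2 := key S a c b d hab had hbc.symm hcd m r n s
  have K3 := key S b c a d hab.symm hbd hac.symm hcd n r m s
  simp only [wd_swap23 S a c b d hbc.symm] at K2
  simp only [wd_swap23 S b c a d hac.symm, wd_swap12 S b a c d hab.symm] at K3
  exact triple_combine K1 K2 K3 (Int.cast_ne_zero.mpr (by omega))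

lemma step2 (a b c d : Fin ℓ) (hab : a ≠ b) (hac : a ≠ c) (had : a ≠ d)
    (hbc : b ≠ c) (hbd : b ≠ d) (hcd : c ≠ d) (m n r s : ℤ) (hn : 1 ≤ n) :
    wd S a b c d m (n + 1) r s + wd S a b c d m n r s ∈ Submodule.map S.ι S.B.Osub := by
  have K1 := key S b a c d hbc hbd hac had n m r s
  have K2 := key S b c a d hab.symm hbd hac.symm hcd n r m s
  have K3 := key S a c b d hab had hbc.symm hcd m r n s
  simp only [wd_swap12 S b a c d hab.symm] at K1
  simp only [wd_swap23 S b c a d hac.symm, wd_swap12 S b a c d hab.symm] at K2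
  simp only [wd_swap23 S a c b d hbc.symm] at K3
  exact triple_combine K1 K2 K3 (Int.cast_ne_zero.mpr (by omega))

lemma step3 (a b c d : Fin ℓ) (hab : a ≠ b) (hac : a ≠ c) (had : a ≠ d)
    (hbc : b ≠ c) (hbd : b ≠ d) (hcd : c ≠ d) (m n r s : ℤ) (hr : 1 ≤ r) :
    wd S a b c d m n (r + 1) s + wd S a b c d m n r s ∈ Submodule.map S.ι S.B.Osub := by
  have K1 := key S c a b d hbc.symm hcd hab had r m n s
  have K2 := key S c b a d hac.symm hcd hab.symm hbd r n m s
  have K3 := key S a b c d hac had hbc hbd m n r s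
  simp only [wd_swap12 S c a b d hac.symm, wd_swap23 S a c b d hbc.symm] at K1
  simp only [wd_swap23 S c b a d hab.symm, wd_swap12 S c a b d hac.symm,
    wd_swap23 S a c b d hbc.symm] at K2
  exact triple_combine K1 K2 K3 (Int.cast_ne_zero.mpr (by omega))

lemma step4 (a b c d : Fin ℓ) (hab : a ≠ b) (hac : a ≠ c) (had : a ≠ d)
    (hbc : b ≠ c) (hbd : b ≠ d) (hcd : c ≠ d) (m n r s : ℤ) (hs : 1 ≤ s) :
    wd S a b c d m n r (s + 1) + wd S a b c d m n r s ∈ Submodule.map S.ι S.B.Osub := by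
  have K1 := key S d a b c hbd.symm hcd.symm hab hac s m n r
  have K2 := key S d b a c had.symm hcd.symm hab.symm hbc s n m r
  have K3 := key S a b c d hac had hbc hbd m n r s
  simp only [wd_swap12 S d a b c had.symm, wd_swap23 S a d b c hbd.symm,
    wd_swap34 S a b d c hcd.symm] at K1
  simp only [wd_swap23 S d b a c hab.symm, wd_swap12 S d a b c had.symm,
    wd_swap23 S a d b c hbd.symm, wd_swap34 S a b d c hcd.symm] at K2
  exact triple_combine K1 K2 K3 (Int.cast_ne_zero.mpr (by omega))

lemma main (a b c d : Fin ℓ) (hab : a ≠ b) (hac : a ≠ c) (had : a ≠ d)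
    (hbc : b ≠ c) (hbd : b ≠ d) (hcd : c ≠ d) :
    ∀ k : ℕ, ∀ m n r s : ℤ, 1 ≤ m → 1 ≤ n → 1 ≤ r → 1 ≤ s → m + n + r + s = k + 4 →
    wd S a b c d m n r s - ((-1 : ℂ) ^ k) • wd S a b c d 1 1 1 1
      ∈ Submodule.map S.ι S.B.Osub := by
  intro k
  induction k with
  | zero =>
    intro m n r s hm hn hr hs hsum
    have h1 : m = 1 := by omega
    have h2 : n = 1 := by omega
    have h3 : r = 1 := by omega
    have h4 : s = 1 := by omega
    subst h1 h2 h3 h4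
    simp
  | succ k ih =>
    intro m n r s hm hn hr hs hsum
    rcases (by omega : 2 ≤ m ∨ 2 ≤ n ∨ 2 ≤ r ∨ 2 ≤ s) with h | h | h | h
    · have hstep := step1 S a b c d hab hac had hbc hbd hcd (m - 1) n r s (by omega)
      rw [show m - 1 + 1 = m by ring] at hstep
      have hIH := ih (m - 1) n r s (by omega) hn hr hs (by omega)
      have hres := Submodule.sub_mem _ hstep hIH
      have heq : wd S a b c d m n r s - ((-1 : ℂ) ^ (k + 1)) • wd S a b c d 1 1 1 1
          = (wd S a b c d m n r s + wd S a b c d (m - 1) n r s)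
            - (wd S a b c d (m - 1) n r s - ((-1 : ℂ) ^ k) • wd S a b c d 1 1 1 1) := by
        rw [pow_succ]; module
      rw [heq]; exact hres
    · have hstep := step2 S a b c d hab hac had hbc hbd hcd m (n - 1) r s (by omega)
      rw [show n - 1 + 1 = n by ring] at hstep
      have hIH := ih m (n - 1) r s hm (by omega) hr hs (by omega)
      have hres := Submodule.sub_mem _ hstep hIH
      have heq : wd S a b c d m n r s - ((-1 : ℂ) ^ (k + 1)) • wd S a b c d 1 1 1 1
          = (wd S a b c d m n r s + wd S a b c d m (n - 1) r s)
            - (wd S a b c d m (n - 1) r s - ((-1 : ℂ) ^ k) • wd S a b c d 1 1 1 1) := by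
        rw [pow_succ]; module
      rw [heq]; exact hres
    · have hstep := step3 S a b c d hab hac had hbc hbd hcd m n (r - 1) s (by omega)
      rw [show r - 1 + 1 = r by ring] at hstep
      have hIH := ih m n (r - 1) s hm hn (by omega) hs (by omega)
      have hres := Submodule.sub_mem _ hstep hIH
      have heq : wd S a b c d m n r s - ((-1 : ℂ) ^ (k + 1)) • wd S a b c d 1 1 1 1
          = (wd S a b c d m n r s + wd S a b c d m n (r - 1) s)
            - (wd S a b c d m n (r - 1) s - ((-1 : ℂ) ^ k) • wd S a b c d 1 1 1 1) := by
        rw [pow_succ]; module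
      rw [heq]; exact hres
    · have hstep := step4 S a b c d hab hac had hbc hbd hcd m n r (s - 1) (by omega)
      rw [show s - 1 + 1 = s by ring] at hstep
      have hIH := ih m n r (s - 1) hm hn hr (by omega) (by omega)
      have hres := Submodule.sub_mem _ hstep hIH
      have heq : wd S a b c d m n r s - ((-1 : ℂ) ^ (k + 1)) • wd S a b c d 1 1 1 1
          = (wd S a b c d m n r s + wd S a b c d m n r (s - 1))
            - (wd S a b c d m n r (s - 1) - ((-1 : ℂ) ^ k) • wd S a b c d 1 1 1 1) := by
        rw [pow_succ]; module
      rw [heq]; exact hres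

end

end St9


/-- Lemma 4.1.6. For distinct `a,b,c,d` and positive integers
`m,n,r,s`, in `A(𝓗⁺)`:
`S_{abcd}(m,n,r,s) + O(𝓗⁺) = (-1)^{m+n+r+s} S_{abcd}(1,1,1,1) + O(𝓗⁺)`,
where `S_{abcd}(m,n,r,s) = h_a(-m)h_b(-n)h_c(-r)h_d(-s)𝟏`. -/
theorem statement9 (ℓ : ℕ) {V W : Type} [AddCommGroup V] [Module ℂ V]
    [AddCommGroup W] [Module ℂ W] (S : HeisenbergPlusSetting ℓ V W)
    (a b c d : Fin ℓ) (hab : a ≠ b) (hac : a ≠ c) (had : a ≠ d)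
    (hbc : b ≠ c) (hbd : b ≠ d) (hcd : c ≠ d)
    (m n r s : ℤ) (hm : 1 ≤ m) (hn : 1 ≤ n) (hr : 1 ≤ r) (hs : 1 ≤ s)
    (x x1 : W)
    (hx : S.ι x = S.A.Y (S.hgen a) (-m) (S.A.Y (S.hgen b) (-n)
      (S.A.Y (S.hgen c) (-r) (S.A.Y (S.hgen d) (-s) S.A.one))))
    (hx1 : S.ι x1 = S.A.Y (S.hgen a) (-1) (S.A.Y (S.hgen b) (-1)
      (S.A.Y (S.hgen c) (-1) (S.A.Y (S.hgen d) (-1) S.A.one)))) :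
    x - ((-1 : ℂ) ^ (m + n + r + s)) • x1 ∈ S.B.Osub := by
  obtain ⟨t, ht⟩ : ∃ t : ℕ, m + n + r + s = (t : ℤ) + 4 :=
    ⟨(m + n + r + s - 4).toNat, by omega⟩
  obtain ⟨o, ho, hoe⟩ := St9.main S a b c d hab hac had hbc hbd hcd
    t m n r s hm hn hr hs ht
  have hsign : ((-1 : ℂ) ^ (m + n + r + s)) = ((-1 : ℂ) ^ t) := by
    rw [ht, show ((t : ℤ) + 4) = ((t + 4 : ℕ) : ℤ) by push_cast; ring,
      zpow_natCast, pow_add]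
    norm_num
  have hι : S.ι (x - ((-1 : ℂ) ^ (m + n + r + s)) • x1) = S.ι o := by
    rw [map_sub, map_smul, hx, hx1, hoe, hsign]
    simp only [St9.wd]
  have hxo := S.fixedSub.inj hι
  rw [hxo]; exact ho
end
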